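/- arXiv:math-ph/0405004 — 7 statements merged into one kernel-verified Lean document; each statement's English description precedes it below -/
import Mathlib

section
/- Discrete cell-distribution minimization: Let p be a positive integer and let k > 0 be real. Minimize T(c) = Σ_{n<p} c_n n(n-1) + ½ Σ_{n≥p} c_n n (p-1) over coefficients c_n ≥ 0 with Σ_n c_n = 1 and Σ_n c_n n = k. If p ≥ 4k then the minimum value is at least k(k-1). -/
/-- **Discrete cell-distribution minimization.** Minimizing
`T(c) = Σ_{n<p} c_n n(n-1) + ½ Σ_{n≥p} c_n n (p-1)` over nonnegative coefficients with
`Σ c_n = 1` and `Σ c_n n = k`: if `p ≥ 4k` then `T(c) ≥ k(k-1)`. -/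
theorem cell_distribution_min (p : ℕ) (k : ℝ) (hk : 0 < k) (hp : 4 * k ≤ (p : ℝ))
    (c : ℕ → ℝ) (hc : ∀ n, 0 ≤ c n)
    (hsc : Summable c) (hscn : Summable (fun n => c n * n))
    (hsum : ∑' n, c n = 1) (hmean : ∑' n, c n * n = k) :
    k * (k - 1) ≤
      (∑ n ∈ Finset.range p, c n * n * ((n : ℝ) - 1)) +
        (1 / 2) * ∑' n : ℕ, (if p ≤ n then c n * n * ((p : ℝ) - 1) else 0) := by
  set t := ∑ n ∈ Finset.range p, c n * n with ht
  set g : ℕ → ℝ := fun n => if p ≤ n then c n * n else 0 with hg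
  have hcn : ∀ n : ℕ, 0 ≤ c n * n := fun n => mul_nonneg (hc n) n.cast_nonneg
  have hgnn : ∀ n, 0 ≤ g n := by
    intro n; simp only [hg]; split
    · exact hcn n
    · exact le_rfl
  have hgle : ∀ n, g n ≤ c n * n := by
    intro n; simp only [hg]; split
    · exact le_rfl
    · exact hcn n
  have hgsum : Summable g := Summable.of_nonneg_of_le hgnn hgle hscn
  have hhsum : Summable (fun n => if n < p then c n * n else 0) := by
    have : (fun n => if n < p then c n * n else 0) = fun n => c n * n - g n := by
      funext n; simp only [hg]
      by_cases h : p ≤ n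
      · simp [h, Nat.not_lt.mpr h]
      · simp [h, Nat.lt_of_not_le h]
    rw [this]; exact hscn.sub hgsum
  -- split the mean
  have hsplit : k = t + ∑' n, g n := by
    have h1 : ∑' n, c n * n = (∑' n, (if n < p then c n * n else 0)) + ∑' n, g n := by
      rw [← Summable.tsum_add hhsum hgsum]
      congr 1; funext n
      simp only [hg]
      by_cases h : p ≤ n
      · simp [h, Nat.not_lt.mpr h]
      · simp [h, Nat.lt_of_not_le h]
    have h2 : ∑' n, (if n < p then c n * n else 0) = t := by
      rw [ht, tsum_eq_sum (s := Finset.range p)]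
      · apply Finset.sum_congr rfl
        intro n hn; simp [Finset.mem_range.mp hn]
      · intro n hn
        have : ¬ n < p := fun h => hn (Finset.mem_range.mpr h)
        simp [this]
    rw [hmean, h2] at h1
    exact h1
  have hu : 0 ≤ ∑' n, g n := tsum_nonneg hgnn
  have htk : t ≤ k := by linarith [hsplit, hu]
  have htnn : 0 ≤ t := Finset.sum_nonneg fun n _ => hcn n
  -- Cauchy-Schwarz
  have hs1 : ∑ n ∈ Finset.range p, c n ≤ 1 := by
    rw [← hsum]
    exact Summable.sum_le_tsum _ (fun n _ => hc n) hsc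
  have hCS : t ^ 2 ≤ (∑ n ∈ Finset.range p, c n) * ∑ n ∈ Finset.range p, c n * (n : ℝ) ^ 2 := by
    apply Finset.sum_sq_le_sum_mul_sum_of_sq_eq_mul
    · intro i _; exact hc i
    · intro i _; exact mul_nonneg (hc i) (sq_nonneg _)
    · intro i _; ring
  have hsq_nn : 0 ≤ ∑ n ∈ Finset.range p, c n * (n : ℝ) ^ 2 :=
    Finset.sum_nonneg fun n _ => mul_nonneg (hc n) (sq_nonneg _)
  have hCS2 : t ^ 2 ≤ ∑ n ∈ Finset.range p, c n * (n : ℝ) ^ 2 := by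
    calc t ^ 2 ≤ (∑ n ∈ Finset.range p, c n) * ∑ n ∈ Finset.range p, c n * (n : ℝ) ^ 2 := hCS
    _ ≤ 1 * ∑ n ∈ Finset.range p, c n * (n : ℝ) ^ 2 := by
        apply mul_le_mul_of_nonneg_right hs1 hsq_nn
    _ = _ := one_mul _
  have hA : t ^ 2 - t ≤ ∑ n ∈ Finset.range p, c n * n * ((n : ℝ) - 1) := by
    have : ∑ n ∈ Finset.range p, c n * n * ((n : ℝ) - 1)
        = (∑ n ∈ Finset.range p, c n * (n : ℝ) ^ 2) - t := by
      rw [ht, ← Finset.sum_sub_distrib]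
      apply Finset.sum_congr rfl; intro n _; ring
    rw [this]; linarith
  -- the tail term
  have htail : ∑' n : ℕ, (if p ≤ n then c n * n * ((p : ℝ) - 1) else 0)
      = ((p : ℝ) - 1) * ∑' n, g n := by
    rw [← tsum_mul_left]
    congr 1; funext n
    simp only [hg]
    split <;> ring
  rw [htail]
  have hgval : ∑' n, g n = k - t := by linarith [hsplit]
  rw [hgval]
  nlinarith [mul_nonneg (sub_nonneg.mpr htk) (sub_nonneg.mpr (by linarith : k + t - 1 ≤ ((p:ℝ)-1)/2))]
end

section
/- Elementary logarithmic inequality: For all real 0 < x < 1, 0 < b < 1, and k ≥ 1, x²/|ln x| - 2 (b/|ln b|) x k ≥ - (b²/|ln b|)(1 + 1/(2|ln b|)²) k². -/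
/-!
Write `L = |ln b|`, `s = |ln x|` and `a = b k`. From `ln (x / a) ≥ 1 - a / x` and `k ≥ 1` we get
`s ≤ L + v` with `v = a / x - 1`, and then `(L - v) s ≤ L² - v² ≤ L²` gives `L / s ≥ 1 - v / L`,
i.e. `x² / s ≥ ((1 + 1/L) x² - a x / L) / L`. The claim reduces to the nonnegativity of the
quadratic form `(1 + p) x² - (2 + p) a x + (1 + p² / 4) a²` with `p = 1 / L`, whose discriminant
is `-p³ a²`.
-/

open Real

lemma quadratic_nonneg {p : ℝ} (hp : 0 ≤ p) (x a : ℝ) :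
    0 ≤ (1 + p) * x ^ 2 - (2 + p) * a * x + (1 + p ^ 2 / 4) * a ^ 2 := by
  have h : 4 * (1 + p) * ((1 + p) * x ^ 2 - (2 + p) * a * x + (1 + p ^ 2 / 4) * a ^ 2) =
      (2 * (1 + p) * x - (2 + p) * a) ^ 2 + p ^ 3 * a ^ 2 := by ring
  refine nonneg_of_mul_nonneg_right ?_ (by positivity : (0 : ℝ) < 4 * (1 + p))
  rw [h]
  positivity

lemma one_sub_div_le_div_of_le_add {L s v : ℝ} (hL : 0 < L) (hs : 0 < s) (h : s ≤ L + v) :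
    1 - v / L ≤ L / s := by
  rcases le_or_gt L v with hv | hv
  · calc 1 - v / L ≤ 0 := by rw [sub_nonpos, one_le_div hL]; exact hv
      _ ≤ L / s := by positivity
  · rw [one_sub_div hL.ne', div_le_div_iff₀ hL hs]
    nlinarith [mul_le_mul_of_nonneg_left h (sub_nonneg.2 hv.le), sq_nonneg v]

lemma neg_log_le_neg_log_add {x b k : ℝ} (hx : 0 < x) (hb : 0 < b) (hk : 1 ≤ k) :
    -log x ≤ -log b + (b * k / x - 1) := by
  have hbk : 0 < b * k := by positivity
  have h1 := one_sub_inv_le_log_of_pos (div_pos hx hbk)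
  rw [inv_div, log_div hx.ne' hbk.ne', log_mul hb.ne' (by positivity)] at h1
  linarith [log_nonneg hk]

/-- **Elementary logarithmic inequality** (Lemma `xb` of the 2D trapped Bose gas lower
bound): for `0 < x < 1`, `0 < b < 1` and `k ≥ 1`,
`x²/|ln x| - 2 (b/|ln b|) x k ≥ - (b²/|ln b|)(1 + 1/(2|ln b|)²) k²`. -/
theorem log_inequality (x b k : ℝ) (hx0 : 0 < x) (hx1 : x < 1)
    (hb0 : 0 < b) (hb1 : b < 1) (hk : 1 ≤ k) :
    -(b ^ 2 / |Real.log b|) * (1 + 1 / (2 * |Real.log b|) ^ 2) * k ^ 2 ≤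
      x ^ 2 / |Real.log x| - 2 * (b / |Real.log b|) * x * k := by
  rw [abs_of_neg (log_neg hx0 hx1), abs_of_neg (log_neg hb0 hb1)]
  set L := -log b
  have hL : 0 < L := neg_pos.2 (log_neg hb0 hb1)
  have hs : 0 < -log x := neg_pos.2 (log_neg hx0 hx1)
  have hratio := one_sub_div_le_div_of_le_add hL hs (neg_log_le_neg_log_add hx0 hb0 hk)
  have hmain : x ^ 2 / L * (1 - (b * k / x - 1) / L) ≤ x ^ 2 / -log x := by
    calc _ ≤ x ^ 2 / L * (L / -log x) := by gcongr
      _ = x ^ 2 / -log x := by field_simp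
  have hq := quadratic_nonneg (inv_nonneg.2 hL.le) x (b * k)
  have hsplit : x ^ 2 / L * (1 - (b * k / x - 1) / L) - 2 * (b / L) * x * k
      + (b ^ 2 / L) * (1 + 1 / (2 * L) ^ 2) * k ^ 2 =
      ((1 + L⁻¹) * x ^ 2 - (2 + L⁻¹) * (b * k) * x + (1 + L⁻¹ ^ 2 / 4) * (b * k) ^ 2) / L := by
    field_simp
    ring
  linarith [div_nonneg hq hL.le]
end

section
/- Bogolubov diagonalization lower bound (one-component version): Let b be a (possibly unbounded) operator with [b, b*] ≤ 1 in the sense of quadratic forms, and consider commuting copies b₊, b₋ with [b_τ, b_τ*] ≤ 1, τ = ±. Then for all real A, B ≥ 0: A(b₊* b₊ + b₋* b₋) + B(b₊* b₊ + b₋* b₋ + b₊* b₋* + b₊ b₋) ≥ -(A + B) + √((A + B)² - B²), and the bound is sharp if b_± are annihilation operators. -/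
open ContinuousLinearMap RCLike
open scoped InnerProductSpace

/-!
For real `λ`, `0 ≤ ‖b₊ψ + λ b₋*ψ‖² + ‖b₋ψ + λ b₊*ψ‖²`, and the commutator bound
`‖b*ψ‖² ≤ ‖bψ‖² + ‖ψ‖²` turns this into
`0 ≤ (1 + λ²) N + 2λ²‖ψ‖² + 4λ Re⟪ψ, b₊b₋ψ⟫` with `N = ‖b₊ψ‖² + ‖b₋ψ‖²`.
Multiplying by `D ≥ 0` with `D(1 + λ²) = A + B` and `2Dλ = B` gives the quadratic form of the
theorem up to the error `2Dλ²‖ψ‖² = (A + B - √((A + B)² - B²))‖ψ‖²`.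
-/

theorem exists_bogolubov_coefficients {A B : ℝ} (hA : 0 ≤ A) (hB : 0 ≤ B) :
    ∃ D l : ℝ, 0 ≤ D ∧ D * (1 + l ^ 2) = A + B ∧ 2 * D * l = B ∧
      2 * D * l ^ 2 = A + B - √((A + B) ^ 2 - B ^ 2) := by
  set r := √((A + B) ^ 2 - B ^ 2)
  have hr : r ^ 2 = (A + B) ^ 2 - B ^ 2 := Real.sq_sqrt (by nlinarith)
  have hr₀ : 0 ≤ r := Real.sqrt_nonneg _
  -- `l = B / (A + B + r)` is the smaller root of `B l² - 2(A + B) l + B = 0`.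
  rcases (show 0 ≤ A + B + r by linarith).eq_or_lt with h | h
  · exact ⟨0, 0, le_rfl, by linarith, by linarith, by linarith⟩
  · refine ⟨(A + B + r) / 2, B / (A + B + r), by linarith, ?_, ?_, ?_⟩ <;>
      field_simp <;> nlinarith

theorem bogolubov_scalar_bound {A B N s u : ℝ} (hA : 0 ≤ A) (hB : 0 ≤ B)
    (h : ∀ l : ℝ, 0 ≤ (1 + l ^ 2) * N + 2 * l ^ 2 * s + 4 * l * u) :
    (-(A + B) + √((A + B) ^ 2 - B ^ 2)) * s ≤ (A + B) * N + 2 * B * u := by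
  obtain ⟨D, l, hD, h₁, h₂, h₃⟩ := exists_bogolubov_coefficients hA hB
  have key : D * ((1 + l ^ 2) * N + 2 * l ^ 2 * s + 4 * l * u) =
      (A + B) * N + (A + B - √((A + B) ^ 2 - B ^ 2)) * s + 2 * B * u := by
    linear_combination N * h₁ + s * h₃ + 2 * u * h₂
  linarith [mul_nonneg hD (h l)]

section

variable {𝕜 E : Type*} [RCLike 𝕜] [NormedAddCommGroup E] [InnerProductSpace 𝕜 E]

theorem norm_add_ofReal_smul_sq (x y : E) (l : ℝ) :
    ‖x + (l : 𝕜) • y‖ ^ 2 = ‖x‖ ^ 2 + 2 * l * re ⟪x, y⟫_𝕜 + l ^ 2 * ‖y‖ ^ 2 := by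
  rw [norm_add_sq (𝕜 := 𝕜), inner_smul_real_right, norm_smul, norm_ofReal, mul_pow, sq_abs,
    smul_re]
  ring

variable [CompleteSpace E]

theorem re_inner_adjoint_mul_self (T : E →L[𝕜] E) (ψ : E) :
    re ⟪ψ, (adjoint T * T) ψ⟫_𝕜 = ‖T ψ‖ ^ 2 :=
  (apply_norm_sq_eq_inner_adjoint_right T ψ).symm

theorem re_inner_mul_adjoint_self (T : E →L[𝕜] E) (ψ : E) :
    re ⟪ψ, (T * adjoint T) ψ⟫_𝕜 = ‖adjoint T ψ‖ ^ 2 := by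
  simpa only [adjoint_adjoint] using re_inner_adjoint_mul_self (adjoint T) ψ

theorem re_inner_apply_adjoint_apply (a b : E →L[𝕜] E) (ψ : E) :
    re ⟪a ψ, adjoint b ψ⟫_𝕜 = re ⟪ψ, (b * a) ψ⟫_𝕜 := by
  rw [adjoint_inner_right, ← inner_conj_symm, conj_re, mul_apply_eq_comp]

theorem re_inner_adjoint_mul_adjoint (a b : E →L[𝕜] E) (ψ : E) :
    re ⟪ψ, (adjoint a * adjoint b) ψ⟫_𝕜 = re ⟪ψ, (b * a) ψ⟫_𝕜 := by
  rw [mul_apply_eq_comp, adjoint_inner_right, re_inner_apply_adjoint_apply]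

theorem norm_adjoint_apply_sq_le {b : E →L[𝕜] E}
    (hccr : ∀ ψ, re ⟪ψ, (b * adjoint b - adjoint b * b) ψ⟫_𝕜 ≤ ‖ψ‖ ^ 2) (ψ : E) :
    ‖adjoint b ψ‖ ^ 2 ≤ ‖b ψ‖ ^ 2 + ‖ψ‖ ^ 2 := by
  have h := hccr ψ
  rw [sub_apply, inner_sub_right, map_sub, re_inner_mul_adjoint_self,
    re_inner_adjoint_mul_self] at h
  linarith

variable {bp bm : E →L[𝕜] E}

theorem bogolubov_form_nonneg (hcomm : bp * bm = bm * bp)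
    (hp : ∀ ψ, ‖adjoint bp ψ‖ ^ 2 ≤ ‖bp ψ‖ ^ 2 + ‖ψ‖ ^ 2)
    (hm : ∀ ψ, ‖adjoint bm ψ‖ ^ 2 ≤ ‖bm ψ‖ ^ 2 + ‖ψ‖ ^ 2) (ψ : E) (l : ℝ) :
    0 ≤ (1 + l ^ 2) * (‖bp ψ‖ ^ 2 + ‖bm ψ‖ ^ 2) + 2 * l ^ 2 * ‖ψ‖ ^ 2 +
      4 * l * re ⟪ψ, (bp * bm) ψ⟫_𝕜 := by
  have hsq_p := norm_add_ofReal_smul_sq (𝕜 := 𝕜) (bp ψ) (adjoint bm ψ) l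
  have hsq_m := norm_add_ofReal_smul_sq (𝕜 := 𝕜) (bm ψ) (adjoint bp ψ) l
  rw [re_inner_apply_adjoint_apply, ← hcomm] at hsq_p
  rw [re_inner_apply_adjoint_apply] at hsq_m
  linarith [sq_nonneg ‖bp ψ + (l : 𝕜) • adjoint bm ψ‖, sq_nonneg ‖bm ψ + (l : 𝕜) • adjoint bp ψ‖,
    mul_le_mul_of_nonneg_left (hp ψ) (sq_nonneg l), mul_le_mul_of_nonneg_left (hm ψ) (sq_nonneg l)]

theorem re_inner_bogolubov_apply (hcomm : bp * bm = bm * bp) (A B : ℝ) (ψ : E) :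
    re ⟪ψ, ((A : 𝕜) • (adjoint bp * bp + adjoint bm * bm) +
        (B : 𝕜) • (adjoint bp * bp + adjoint bm * bm + adjoint bp * adjoint bm + bp * bm)) ψ⟫_𝕜 =
      (A + B) * (‖bp ψ‖ ^ 2 + ‖bm ψ‖ ^ 2) + 2 * B * re ⟪ψ, (bp * bm) ψ⟫_𝕜 := by
  simp only [add_apply, smul_apply, inner_add_right, inner_smul_real_right, map_add, smul_re,
    re_inner_adjoint_mul_self, re_inner_adjoint_mul_adjoint, ← hcomm]
  ring

end

theorem bogolubov_one_component_general
    {H : Type*} [NormedAddCommGroup H] [InnerProductSpace ℂ H] [CompleteSpace H]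
    (bp bm : H →L[ℂ] H)
    (hcomm : bp * bm = bm * bp)
    (hccr_p : ∀ ψ : H,
      ((inner ℂ ψ (((bp * adjoint bp - adjoint bp * bp)) ψ) : ℂ)).re ≤ ‖ψ‖ ^ 2)
    (hccr_m : ∀ ψ : H,
      ((inner ℂ ψ (((bm * adjoint bm - adjoint bm * bm)) ψ) : ℂ)).re ≤ ‖ψ‖ ^ 2)
    (A B : ℝ) (hA : 0 ≤ A) (hB : 0 ≤ B) :
    ∀ ψ : H,
      (-(A + B) + Real.sqrt ((A + B) ^ 2 - B ^ 2)) * ‖ψ‖ ^ 2 ≤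
        ((inner ℂ ψ
          ((((A : ℂ) • (adjoint bp * bp + adjoint bm * bm) +
            (B : ℂ) • (adjoint bp * bp + adjoint bm * bm +
              adjoint bp * adjoint bm + bp * bm))) ψ) : ℂ)).re := by
  intro ψ
  calc _ ≤ (A + B) * (‖bp ψ‖ ^ 2 + ‖bm ψ‖ ^ 2) + 2 * B * re ⟪ψ, (bp * bm) ψ⟫_ℂ :=
        bogolubov_scalar_bound hA hB <| bogolubov_form_nonneg hcomm
          (norm_adjoint_apply_sq_le hccr_p) (norm_adjoint_apply_sq_le hccr_m) ψ
    _ = _ := (re_inner_bogolubov_apply hcomm A B ψ).symm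

/-- **Bogolubov diagonalization lower bound, one-component version.** Let `b₊, b₋` be
commuting operators with `[b_τ, b_τ*] ≤ 1` (in the quadratic form sense).  Then for all
reals `A, B ≥ 0`,
`A(b₊*b₊ + b₋*b₋) + B(b₊*b₊ + b₋*b₋ + b₊*b₋* + b₊b₋) ≥ -(A+B) + √((A+B)² - B²)`. -/
theorem bogolubov_one_component
    {H : Type*} [NormedAddCommGroup H] [InnerProductSpace ℂ H] [CompleteSpace H]
    (bp bm : H →L[ℂ] H)
    (hcomm : bp * bm = bm * bp)
    (hcomm' : bp * adjoint bm = adjoint bm * bp)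
    (hccr_p : ∀ ψ : H,
      ((inner ℂ ψ (((bp * adjoint bp - adjoint bp * bp)) ψ) : ℂ)).re ≤ ‖ψ‖ ^ 2)
    (hccr_m : ∀ ψ : H,
      ((inner ℂ ψ (((bm * adjoint bm - adjoint bm * bm)) ψ) : ℂ)).re ≤ ‖ψ‖ ^ 2)
    (A B : ℝ) (hA : 0 ≤ A) (hB : 0 ≤ B) :
    ∀ ψ : H,
      (-(A + B) + Real.sqrt ((A + B) ^ 2 - B ^ 2)) * ‖ψ‖ ^ 2 ≤
        ((inner ℂ ψ
          ((((A : ℂ) • (adjoint bp * bp + adjoint bm * bm) +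
            (B : ℂ) • (adjoint bp * bp + adjoint bm * bm +
              adjoint bp * adjoint bm + bp * bm))) ψ) : ℂ)).re :=
  bogolubov_one_component_general bp bm hcomm hccr_p hccr_m A B hA hB
end

section
/- Bogolubov method, two-component version: Let b_{τ,e}, τ, e ∈ {+,-}, be four commuting operators with [b_{τ,e}, b*_{τ,e}] ≤ 1. Then for all real A, B₊, B₋ ≥ 0, A Σ_{τ,e} b*_{τ,e} b_{τ,e} + Σ_{e,e'} √(B_e B_{e'}) e e' ( b*_{+,e} b_{+,e'} + b*_{-,e} b_{-,e'} + b*_{+,e} b*_{-,e'} + b_{+,e} b_{-,e'} ) ≥ -(A + B₊ + B₋) + √((A + B₊ + B₋)² - (B₊ + B₋)²). -/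
/-!
Write `D_τ = √B₊ b_{τ,+} - √B₋ b_{τ,-}`. The `B`-part of the Hamiltonian is
`D₊* D₊ + D₋* D₋ + D₊* D₋* + D₊ D₋`, and since `b_{τ,+}` commutes with `b*_{τ,-}` the
commutator `[D_τ, D_τ*]` is `B₊ [b_{τ,+}, b*_{τ,+}] + B₋ [b_{τ,-}, b*_{τ,-}] ≤ β := B₊ + B₋`,
while Cauchy–Schwarz gives `D_τ* D_τ ≤ β (b*_{τ,+} b_{τ,+} + b*_{τ,-} b_{τ,-})`. This is the
one-pair Bogolubov problem with `B` replaced by `β`, solved by completing the squares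
`‖(D₊ + l D₋*) ψ‖² + ‖(D₋ + l D₊*) ψ‖² ≥ 0` with `l` the smaller root of
`β l² - 2 (A + β) l + β = 0`.
-/

open ContinuousLinearMap RCLike
open scoped InnerProductSpace

theorem exists_bogolubov_parameter {A β : ℝ} (hA : 0 ≤ A) (hβ : 0 < β) :
    ∃ l > 0, l * β = A + β - √((A + β) ^ 2 - β ^ 2) ∧ β * (1 + l ^ 2) = 2 * l * (A + β) := by
  set s := √((A + β) ^ 2 - β ^ 2)
  have hs : s ^ 2 = (A + β) ^ 2 - β ^ 2 := Real.sq_sqrt (by nlinarith)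
  have hs0 : 0 ≤ s := Real.sqrt_nonneg _
  refine ⟨(A + β - s) / β, div_pos (by nlinarith) hβ, div_mul_cancel₀ _ hβ.ne', ?_⟩
  field_simp
  linear_combination hs

theorem norm_ofReal_smul_sub_ofReal_smul_sq_le {𝕜 E : Type*} [RCLike 𝕜] [NormedAddCommGroup E]
    [NormedSpace 𝕜 E] (p q : ℝ) (x y : E) :
    ‖(p : 𝕜) • x - (q : 𝕜) • y‖ ^ 2 ≤ (p ^ 2 + q ^ 2) * (‖x‖ ^ 2 + ‖y‖ ^ 2) := by
  have h := norm_sub_le ((p : 𝕜) • x) ((q : 𝕜) • y)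
  rw [norm_smul, norm_smul, norm_ofReal, norm_ofReal] at h
  have hp := sq_abs p
  have hq := sq_abs q
  nlinarith [sq_nonneg (|p| * ‖y‖ - |q| * ‖x‖), norm_nonneg ((p : 𝕜) • x - (q : 𝕜) • y)]

section InnerProductSpace

variable {𝕜 E : Type*} [RCLike 𝕜] [NormedAddCommGroup E] [InnerProductSpace 𝕜 E]

theorem neg_le_two_mul_re_inner (u w : E) (l : ℝ) :
    -(‖u‖ ^ 2 + l ^ 2 * ‖w‖ ^ 2) ≤ 2 * l * re ⟪u, w⟫_𝕜 := by
  have h := norm_add_sq (𝕜 := 𝕜) u ((l : 𝕜) • w)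
  rw [inner_smul_real_right, smul_re, norm_smul, norm_ofReal, mul_pow, sq_abs] at h
  nlinarith [sq_nonneg ‖u + (l : 𝕜) • w‖]

theorem bogolubov_pair_bound {u₁ u₂ w₁ w₂ : E} {A β N r : ℝ} (hA : 0 ≤ A) (hβ : 0 ≤ β)
    (hN : 0 ≤ N) (hw₁ : ‖w₁‖ ^ 2 ≤ ‖u₁‖ ^ 2 + β * r) (hw₂ : ‖w₂‖ ^ 2 ≤ ‖u₂‖ ^ 2 + β * r)
    (hu : ‖u₁‖ ^ 2 + ‖u₂‖ ^ 2 ≤ β * N) :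
    (-(A + β) + √((A + β) ^ 2 - β ^ 2)) * r ≤
      A * N + ‖u₁‖ ^ 2 + ‖u₂‖ ^ 2 + re ⟪u₁, w₂⟫_𝕜 + re ⟪w₁, u₂⟫_𝕜 := by
  rcases hβ.eq_or_lt with rfl | hβ
  · have hu₁ : u₁ = 0 := by rw [← norm_eq_zero]; nlinarith [norm_nonneg u₁, norm_nonneg u₂]
    have hu₂ : u₂ = 0 := by rw [← norm_eq_zero]; nlinarith [norm_nonneg u₁, norm_nonneg u₂]
    simp [hu₁, hu₂, Real.sqrt_sq hA, mul_nonneg hA hN]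
  obtain ⟨l, hl, hlβ, hroot⟩ := exists_bogolubov_parameter hA hβ
  have h₁ := neg_le_two_mul_re_inner (𝕜 := 𝕜) u₁ w₂ l
  have h₂ := neg_le_two_mul_re_inner (𝕜 := 𝕜) u₂ w₁ l
  rw [inner_re_symm] at h₂
  -- `2 l` times the claim is `h₁ + h₂ + l² (hw₁ + hw₂) + (1 - l)² hu`; by `hroot` the
  -- coefficient of `N` cancels, and by `hlβ` the `r`-terms match.
  have hw₁' := mul_le_mul_of_nonneg_left hw₁ (sq_nonneg l)
  have hw₂' := mul_le_mul_of_nonneg_left hw₂ (sq_nonneg l)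
  have hu' := mul_le_mul_of_nonneg_left hu (sq_nonneg (1 - l))
  have hN' := congrArg (N * ·) hroot
  have hr' := congrArg (r * l * ·) hlβ
  refine le_of_mul_le_mul_left ?_ (by positivity : 0 < 2 * l)
  linarith

variable [CompleteSpace E]

theorem inner_mul_apply_eq_inner_adjoint (S T : E →L[𝕜] E) (ψ : E) :
    ⟪ψ, (S * T) ψ⟫_𝕜 = ⟪adjoint S ψ, T ψ⟫_𝕜 := by
  rw [mul_apply_eq_comp, adjoint_inner_left]

theorem re_inner_lie_adjoint_apply (T : E →L[𝕜] E) (ψ : E) :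
    re ⟪ψ, ⁅T, adjoint T⁆ ψ⟫_𝕜 = ‖adjoint T ψ‖ ^ 2 - ‖T ψ‖ ^ 2 := by
  rw [Ring.lie_def, sub_apply, inner_sub_right, map_sub, inner_mul_apply_eq_inner_adjoint,
    inner_mul_apply_eq_inner_adjoint, adjoint_adjoint, inner_self_eq_norm_sq,
    inner_self_eq_norm_sq]

theorem lie_adjoint_ofReal_smul_sub_ofReal_smul {X Y : E →L[𝕜] E}
    (hXY : X * adjoint Y = adjoint Y * X) (p q : ℝ) :
    ⁅(p : 𝕜) • X - (q : 𝕜) • Y, adjoint ((p : 𝕜) • X - (q : 𝕜) • Y)⁆ =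
      ((p ^ 2 : ℝ) : 𝕜) • ⁅X, adjoint X⁆ + ((q ^ 2 : ℝ) : 𝕜) • ⁅Y, adjoint Y⁆ := by
  have hYX : Y * adjoint X = adjoint X * Y := by
    simpa only [star_mul, star_eq_adjoint, adjoint_adjoint] using congrArg star hXY
  simp only [Ring.lie_def, map_sub, map_smulₛₗ, conj_ofReal, mul_sub, sub_mul, smul_mul_assoc,
    mul_smul_comm, hXY, hYX]
  push_cast
  module

theorem norm_adjoint_ofReal_smul_sub_ofReal_smul_apply_sq_le {X Y : E →L[𝕜] E}
    (hXY : X * adjoint Y = adjoint Y * X) (hX : ∀ ψ, re ⟪ψ, ⁅X, adjoint X⁆ ψ⟫_𝕜 ≤ ‖ψ‖ ^ 2)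
    (hY : ∀ ψ, re ⟪ψ, ⁅Y, adjoint Y⁆ ψ⟫_𝕜 ≤ ‖ψ‖ ^ 2) (p q : ℝ) (ψ : E) :
    ‖adjoint ((p : 𝕜) • X - (q : 𝕜) • Y) ψ‖ ^ 2 ≤
      ‖((p : 𝕜) • X - (q : 𝕜) • Y) ψ‖ ^ 2 + (p ^ 2 + q ^ 2) * ‖ψ‖ ^ 2 := by
  have h := re_inner_lie_adjoint_apply ((p : 𝕜) • X - (q : 𝕜) • Y) ψ
  rw [lie_adjoint_ofReal_smul_sub_ofReal_smul hXY, add_apply, smul_apply, smul_apply,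
    inner_add_right, inner_smul_right, inner_smul_right, map_add, re_ofReal_mul,
    re_ofReal_mul] at h
  nlinarith [mul_le_mul_of_nonneg_left (hX ψ) (sq_nonneg p),
    mul_le_mul_of_nonneg_left (hY ψ) (sq_nonneg q)]

end InnerProductSpace

section TwoComponent

variable {𝕜 E : Type*} [RCLike 𝕜] [NormedAddCommGroup E] [InnerProductSpace 𝕜 E]

/-- `√(B₊ + B₋)` times the paper's `d_τ`. -/
noncomputable def pairMode (B : Bool → ℝ) (b : Bool → Bool → E →L[𝕜] E) (τ : Bool) :
    E →L[𝕜] E :=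
  (√(B true) : 𝕜) • b τ true - (√(B false) : 𝕜) • b τ false

theorem norm_pairMode_apply_sq_le (B : Bool → ℝ) (hB : ∀ e, 0 ≤ B e)
    (b : Bool → Bool → E →L[𝕜] E) (τ : Bool) (ψ : E) :
    ‖pairMode B b τ ψ‖ ^ 2 ≤ (B true + B false) * ∑ e : Bool, ‖b τ e ψ‖ ^ 2 := by
  simpa only [pairMode, sub_apply, smul_apply, Real.sq_sqrt (hB _), Fintype.sum_bool,
    add_comm (‖b τ false ψ‖ ^ 2)] using
    norm_ofReal_smul_sub_ofReal_smul_sq_le (𝕜 := 𝕜) (√(B true)) (√(B false)) (b τ true ψ)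
      (b τ false ψ)

variable [CompleteSpace E]

noncomputable def twoComponentHamiltonian (b : Bool → Bool → E →L[𝕜] E) (A : ℝ)
    (B : Bool → ℝ) : E →L[𝕜] E :=
  (A : 𝕜) • (∑ τ : Bool, ∑ e : Bool, adjoint (b τ e) * b τ e) +
    ∑ e : Bool, ∑ e' : Bool,
      (((√(B e * B e') * (if e then (1:ℝ) else -1) * (if e' then (1:ℝ) else -1)) : ℝ) : 𝕜) •
        (adjoint (b true e) * b true e' + adjoint (b false e) * b false e' +
          adjoint (b true e) * adjoint (b false e') + b true e * b false e')

theorem twoComponentHamiltonian_eq (b : Bool → Bool → E →L[𝕜] E) (A : ℝ) (B : Bool → ℝ)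
    (hB : ∀ e, 0 ≤ B e) :
    twoComponentHamiltonian b A B =
      (A : 𝕜) • (∑ τ : Bool, ∑ e : Bool, adjoint (b τ e) * b τ e) +
        adjoint (pairMode B b true) * pairMode B b true +
        adjoint (pairMode B b false) * pairMode B b false +
        adjoint (pairMode B b true) * adjoint (pairMode B b false) +
        pairMode B b true * pairMode B b false := by
  simp only [twoComponentHamiltonian, Fintype.sum_bool, pairMode, if_true, Bool.false_eq_true,
    if_false, Real.sqrt_mul (hB _), map_sub, map_smulₛₗ, conj_ofReal, mul_sub, sub_mul,
    smul_mul_assoc, mul_smul_comm]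
  push_cast
  module

theorem re_inner_twoComponentHamiltonian_apply (b : Bool → Bool → E →L[𝕜] E) (A : ℝ)
    (B : Bool → ℝ) (hB : ∀ e, 0 ≤ B e) (ψ : E) :
    re ⟪ψ, twoComponentHamiltonian b A B ψ⟫_𝕜 =
      A * ∑ τ : Bool, ∑ e : Bool, ‖b τ e ψ‖ ^ 2 +
        ‖pairMode B b true ψ‖ ^ 2 + ‖pairMode B b false ψ‖ ^ 2 +
        re ⟪pairMode B b true ψ, adjoint (pairMode B b false) ψ⟫_𝕜 +
        re ⟪adjoint (pairMode B b true) ψ, pairMode B b false ψ⟫_𝕜 := by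
  simp only [twoComponentHamiltonian_eq b A B hB, add_apply, smul_apply, sum_apply,
    inner_add_right, inner_smul_right, inner_sum, map_add, map_sum, re_ofReal_mul,
    inner_mul_apply_eq_inner_adjoint, adjoint_adjoint, inner_self_eq_norm_sq]

theorem norm_adjoint_pairMode_apply_sq_le (B : Bool → ℝ) (hB : ∀ e, 0 ≤ B e)
    {b : Bool → Bool → E →L[𝕜] E} {τ : Bool}
    (hcomm : b τ true * adjoint (b τ false) = adjoint (b τ false) * b τ true)
    (hccr : ∀ e ψ, re ⟪ψ, ⁅b τ e, adjoint (b τ e)⁆ ψ⟫_𝕜 ≤ ‖ψ‖ ^ 2) (ψ : E) :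
    ‖adjoint (pairMode B b τ) ψ‖ ^ 2 ≤
      ‖pairMode B b τ ψ‖ ^ 2 + (B true + B false) * ‖ψ‖ ^ 2 := by
  simpa only [pairMode, Real.sq_sqrt (hB _)] using
    norm_adjoint_ofReal_smul_sub_ofReal_smul_apply_sq_le hcomm (hccr true) (hccr false)
      (√(B true)) (√(B false)) ψ

end TwoComponent

/-- **Bogolubov's method, two-component version.** Let `b τ e` (`τ, e ∈ {+,-}`, here
`Bool` with `true = +`) be four pairwise commuting operators (also commuting with each
other's adjoints) with `[b_{τ,e}, b*_{τ,e}] ≤ 1`.  With the sign `e = ±1` and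
`B₊, B₋, A ≥ 0`:
`A Σ b* b + Σ_{e,e'} √(B_e B_{e'}) e e' (b*_{+,e}b_{+,e'} + b*_{-,e}b_{-,e'} +
b*_{+,e}b*_{-,e'} + b_{+,e}b_{-,e'}) ≥ -(A+B₊+B₋) + √((A+B₊+B₋)² - (B₊+B₋)²)`. -/
theorem bogolubov_two_component
    {H : Type*} [NormedAddCommGroup H] [InnerProductSpace ℂ H] [CompleteSpace H]
    (b : Bool → Bool → H →L[ℂ] H)
    (hcomm : ∀ τ e τ' e', (τ, e) ≠ (τ', e') →
      b τ e * b τ' e' = b τ' e' * b τ e ∧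
      b τ e * adjoint (b τ' e') = adjoint (b τ' e') * b τ e)
    (hccr : ∀ τ e, ∀ ψ : H,
      ((inner ℂ ψ ((b τ e * adjoint (b τ e) - adjoint (b τ e) * b τ e) ψ) : ℂ)).re
        ≤ ‖ψ‖ ^ 2)
    (A : ℝ) (B : Bool → ℝ) (hA : 0 ≤ A) (hB : ∀ e, 0 ≤ B e) :
    ∀ ψ : H,
      (-(A + B true + B false) +
        Real.sqrt ((A + B true + B false) ^ 2 - (B true + B false) ^ 2)) * ‖ψ‖ ^ 2 ≤
      ((inner ℂ ψ
        (((A : ℂ) • (∑ τ : Bool, ∑ e : Bool, adjoint (b τ e) * b τ e) +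
          ∑ e : Bool, ∑ e' : Bool,
            (((Real.sqrt (B e * B e') *
                (if e then (1:ℝ) else -1) * (if e' then (1:ℝ) else -1)) : ℝ) : ℂ) •
              (adjoint (b true e) * b true e' + adjoint (b false e) * b false e' +
                adjoint (b true e) * adjoint (b false e') + b true e * b false e'))
          ψ) : ℂ)).re := by
  intro ψ
  have hD τ := norm_adjoint_pairMode_apply_sq_le B hB (hcomm τ true τ false (by simp)).2
    (hccr τ) ψ
  have hN : ‖pairMode B b true ψ‖ ^ 2 + ‖pairMode B b false ψ‖ ^ 2 ≤
      (B true + B false) * ∑ τ : Bool, ∑ e : Bool, ‖b τ e ψ‖ ^ 2 := by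
    rw [Fintype.sum_bool _, mul_add]
    exact add_le_add (norm_pairMode_apply_sq_le B hB b true ψ)
      (norm_pairMode_apply_sq_le B hB b false ψ)
  rw [add_assoc A]
  exact (bogolubov_pair_bound (𝕜 := ℂ) hA (add_nonneg (hB true) (hB false)) (by positivity)
    (hD true) (hD false) hN).trans_eq (re_inner_twoComponentHamiltonian_apply b A B hB ψ).symm
end

section
/- Localization of large matrices: Let A be an (N+1)×(N+1) Hermitian matrix, and let A^k denote the matrix keeping only the k-th supra- and infra-diagonal of A. Let ψ ∈ ℂ^{N+1} be a unit vector, d_k = ⟨ψ, A^k ψ⟩, λ = ⟨ψ, Aψ⟩ = Σ_{k=0}^N d_k. For any integer 1 ≤ M ≤ N+1 there exist n ∈ [0, N+1-M] and a unit vector φ ∈ ℂ^{N+1} supported on indices n+1,…,n+M such that ⟨φ, Aφ⟩ ≤ λ + (C/M²) Σ_{k=1}^{M-1} k² |d_k| + C Σ_{k=M}^N |d_k|, where C is a universal constant. -/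
/-!
Average over all translates of a tent-shaped cutoff. Let `f` be the tent of width `M`, `c` its
autocorrelation `c d = ∑ₘ f m * f (m - d)`, and `χₙ = f (· - n) ψ`. Summing over all shifts `n`
turns `∑ₙ ⟨χₙ, A χₙ⟩` into `∑ₖ c k * d k` and `∑ₙ ‖χₙ‖²` into `c 0`. Now `c k = 0` for `k ≥ M`,
`c 0 - c k = ½ ∑ₘ (f m - f (m - k))² ≤ M k²` because `f` is 1-Lipschitz, and `c 0 ≥ M³ / 27`.
Hence `∑ₙ ⟨χₙ, A χₙ⟩ ≤ (λ + 27 / M² ∑ₖ₍ₖ<M₎ k² |d k| + 27 ∑ₖ₍ₖ≥M₎ |d k|) ∑ₙ ‖χₙ‖²`, so some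
`χₙ`, normalized, does at least as well as the average; it lives on `M` consecutive indices.
-/

open Matrix

/-- The `k`-th supra-plus-infra-diagonal part `A^k` of a matrix `A`. -/
def offDiagPart {N : ℕ} (A : Matrix (Fin (N + 1)) (Fin (N + 1)) ℂ) (k : ℕ) :
    Matrix (Fin (N + 1)) (Fin (N + 1)) ℂ :=
  Matrix.of fun i j => if ((i : ℤ) - (j : ℤ)).natAbs = k then A i j else 0

section DiagonalConjugation

variable {ι R : Type*} [Fintype ι] [DecidableEq ι] [CommSemiring R] [StarRing R]

lemma star_diagonal_mulVec_dotProduct_mulVec (f : ι → R) (A : Matrix ι ι R) (ψ : ι → R) :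
    star (diagonal f *ᵥ ψ) ⬝ᵥ A *ᵥ (diagonal f *ᵥ ψ)
      = star ψ ⬝ᵥ (diagonal (star f) * A * diagonal f) *ᵥ ψ := by
  rw [star_mulVec, diagonal_conjTranspose, ← dotProduct_mulVec, mulVec_mulVec, mulVec_mulVec,
    Matrix.mul_assoc]

lemma sum_star_diagonal_mulVec_dotProduct_mulVec {κ : Type*} (s : Finset κ) (f : κ → ι → R)
    (A : Matrix ι ι R) (ψ : ι → R) :
    ∑ n ∈ s, star (diagonal (f n) *ᵥ ψ) ⬝ᵥ A *ᵥ (diagonal (f n) *ᵥ ψ)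
      = star ψ ⬝ᵥ ((of fun i j => ∑ n ∈ s, star (f n i) * f n j) ⊙ A) *ᵥ ψ := by
  simp_rw [star_diagonal_mulVec_dotProduct_mulVec, ← dotProduct_sum, ← sum_mulVec]
  congr 2
  ext i j
  simp [Matrix.sum_apply, hadamard, Finset.sum_mul, mul_right_comm]

end DiagonalConjugation

section OffDiagPart

variable {N : ℕ} (A : Matrix (Fin (N + 1)) (Fin (N + 1)) ℂ) (ψ : Fin (N + 1) → ℂ)

lemma hadamard_eq_sum_smul_offDiagPart (c : ℕ → ℂ) :
    (of fun i j : Fin (N + 1) => c ((i : ℤ) - j).natAbs) ⊙ A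
      = ∑ k ∈ Finset.range (N + 1), c k • offDiagPart A k := by
  ext i j
  have : ((i : ℤ) - j).natAbs ∈ Finset.range (N + 1) := by
    simp only [Finset.mem_range]; omega
  simp [hadamard, Matrix.sum_apply, offDiagPart, this]

lemma dotProduct_hadamard_mulVec (c : ℕ → ℂ) :
    star ψ ⬝ᵥ ((of fun i j : Fin (N + 1) => c ((i : ℤ) - j).natAbs) ⊙ A) *ᵥ ψ
      = ∑ k ∈ Finset.range (N + 1), c k * (star ψ ⬝ᵥ offDiagPart A k *ᵥ ψ) := by
  simp [hadamard_eq_sum_smul_offDiagPart, sum_mulVec, dotProduct_sum, smul_mulVec,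
    dotProduct_smul]

lemma dotProduct_mulVec_eq_sum_offDiagPart :
    star ψ ⬝ᵥ A *ᵥ ψ = ∑ k ∈ Finset.range (N + 1), star ψ ⬝ᵥ offDiagPart A k *ᵥ ψ := by
  have hone : (of fun _ _ => 1) ⊙ A = A := by ext; simp [hadamard]
  simpa [hone] using dotProduct_hadamard_mulVec A ψ fun _ => 1

end OffDiagPart

section Normalization

open scoped ComplexOrder

variable {ι : Type*} [Fintype ι]

lemma Finset.exists_pos_le_mul_of_sum_le {κ : Type*} {s : Finset κ} {e w : κ → ℝ} {R : ℝ}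
    (hw : ∀ n ∈ s, 0 ≤ w n) (he : ∀ n ∈ s, w n = 0 → e n = 0) (hpos : 0 < ∑ n ∈ s, w n)
    (h : ∑ n ∈ s, e n ≤ R * ∑ n ∈ s, w n) : ∃ n ∈ s, 0 < w n ∧ e n ≤ R * w n := by
  by_contra! hcon
  have hle : ∀ n ∈ s, R * w n ≤ e n := fun n hn => (hw n hn).eq_or_lt.elim
    (fun h0 => by rw [← h0, he n hn h0.symm, mul_zero]) fun hp => (hcon n hn hp).le
  obtain ⟨n, hn, hp⟩ := Finset.exists_lt_of_sum_lt (s := s) (f := fun _ => (0 : ℝ))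
    (by simpa using hpos)
  have := Finset.sum_lt_sum hle ⟨n, hn, hcon n hn hp⟩
  rw [← Finset.mul_sum] at this
  linarith

lemma dotProduct_star_self_eq_re (v : ι → ℂ) : star v ⬝ᵥ v = (star v ⬝ᵥ v).re :=
  Complex.eq_re_of_ofReal_le (r := 0) (by simp)

lemma exists_normalizing_smul {v : ι → ℂ} (hv : 0 < (star v ⬝ᵥ v).re) :
    ∃ c : ℂ, star (c • v) ⬝ᵥ c • v = 1 ∧ ∀ A : Matrix ι ι ℂ,
      (star (c • v) ⬝ᵥ A *ᵥ (c • v)).re = (star v ⬝ᵥ A *ᵥ v).re / (star v ⬝ᵥ v).re := by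
  set r : ℝ := (√(star v ⬝ᵥ v).re)⁻¹
  have hr : star (r : ℂ) * r = (((star v ⬝ᵥ v).re)⁻¹ : ℝ) := by
    rw [Complex.star_def, Complex.conj_ofReal, ← Complex.ofReal_mul, ← mul_inv,
      Real.mul_self_sqrt hv.le]
  refine ⟨r, ?_, fun A => ?_⟩
  · rw [star_smul, smul_dotProduct, dotProduct_smul, smul_eq_mul, smul_eq_mul, ← mul_assoc, hr]
    nth_rw 2 [dotProduct_star_self_eq_re]
    rw [← Complex.ofReal_mul, inv_mul_cancel₀ hv.ne', Complex.ofReal_one]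
  · rw [star_smul, mulVec_smul, smul_dotProduct, dotProduct_smul, smul_eq_mul, smul_eq_mul,
      ← mul_assoc, hr, Complex.re_ofReal_mul, inv_mul_eq_div]

lemma exists_smul_re_dotProduct_mulVec_le {κ : Type*} (A : Matrix ι ι ℂ) (s : Finset κ)
    (v : κ → ι → ℂ) {R : ℝ} (hpos : 0 < ∑ n ∈ s, (star (v n) ⬝ᵥ v n).re)
    (h : ∑ n ∈ s, (star (v n) ⬝ᵥ A *ᵥ v n).re ≤ R * ∑ n ∈ s, (star (v n) ⬝ᵥ v n).re) :
    ∃ n ∈ s, ∃ c : ℂ, star (c • v n) ⬝ᵥ c • v n = 1 ∧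
      (star (c • v n) ⬝ᵥ A *ᵥ (c • v n)).re ≤ R := by
  have hnonneg (n : κ) : 0 ≤ (star (v n) ⬝ᵥ v n).re :=
    (Complex.le_def.mp (dotProduct_star_self_nonneg (v n))).1
  have hzero (n : κ) (hn : (star (v n) ⬝ᵥ v n).re = 0) : (star (v n) ⬝ᵥ A *ᵥ v n).re = 0 := by
    have : star (v n) ⬝ᵥ v n = 0 := by rw [dotProduct_star_self_eq_re, hn, Complex.ofReal_zero]
    simp [dotProduct_star_self_eq_zero.mp this]
  obtain ⟨n, hn, hwpos, hle⟩ :=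
    Finset.exists_pos_le_mul_of_sum_le (fun n _ => hnonneg n) (fun n _ => hzero n) hpos h
  obtain ⟨c, hc, hcA⟩ := exists_normalizing_smul hwpos
  exact ⟨n, hn, c, hc, by rw [hcA, div_le_iff₀ hwpos]; exact hle⟩

end Normalization

section Tent

def tent (M : ℕ) (m : ℤ) : ℤ := max 0 (min (m + 1) (M - m))

noncomputable def tentCorr (M : ℕ) (d : ℤ) : ℤ :=
  ∑ m ∈ Finset.Ico 0 (M : ℤ), tent M m * tent M (m - d)

variable {M : ℕ}

lemma tent_eq_zero {m : ℤ} (h : m < 0 ∨ M ≤ m) : tent M m = 0 := by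
  unfold tent; omega

lemma tent_nonneg (m : ℤ) : 0 ≤ tent M m := le_max_left _ _

lemma abs_tent_sub_tent_le (a b : ℤ) : |tent M a - tent M b| ≤ |a - b| := by
  unfold tent
  rcases abs_cases (a - b) with ⟨h, _⟩ | ⟨h, _⟩ <;> rw [h, abs_le] <;> omega

lemma sum_tent_mul_tent {s : Finset ℤ} {i : ℤ} (hs : Finset.Icc (i + 1 - M) i ⊆ s) (j : ℤ) :
    ∑ n ∈ s, tent M (i - n) * tent M (j - n) = tentCorr M (i - j) := by
  rw [← Finset.sum_subset hs fun n _ hn => by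
    rw [tent_eq_zero (by simp only [Finset.mem_Icc] at hn; omega), zero_mul]]
  refine Finset.sum_nbij' (i - ·) (i - ·) ?_ ?_ (fun _ _ => by ring) (fun _ _ => by ring) ?_
  all_goals simp only [Finset.mem_Icc, Finset.mem_Ico]
  · intro n hn; omega
  · intro n hn; omega
  · intro n _; congr 2; ring

lemma tentCorr_neg (d : ℤ) : tentCorr M (-d) = tentCorr M d := by
  have hs : ∀ i : ℤ, i = 0 ∨ i = d →
      Finset.Icc (i + 1 - M) i ⊆ Finset.Icc (1 - M - |d|) |d| := fun i hi n hn => by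
    simp only [Finset.mem_Icc] at hn ⊢; rcases abs_cases d with h | h <;> omega
  calc tentCorr M (-d)
      = ∑ n ∈ Finset.Icc (1 - M - |d|) |d|, tent M (0 - n) * tent M (d - n) := by
        rw [sum_tent_mul_tent (hs 0 (.inl rfl)), zero_sub]
    _ = tentCorr M d := by
        simp_rw [mul_comm (tent M (0 - _))]
        rw [sum_tent_mul_tent (hs d (.inr rfl)), sub_zero]

lemma tentCorr_natAbs (d : ℤ) : tentCorr M d.natAbs = tentCorr M d := by
  rcases d.natAbs_eq with h | h <;> nth_rw 2 [h]
  rw [tentCorr_neg]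

lemma tentCorr_eq_zero_of_le {k : ℤ} (hk : M ≤ k) : tentCorr M k = 0 :=
  Finset.sum_eq_zero fun m hm => by
    rw [tent_eq_zero (m := m - k) (by simp only [Finset.mem_Ico] at hm; omega), mul_zero]

lemma sum_sq_tent_sub_tent (k : ℕ) :
    ∑ n ∈ Finset.Icc (1 - M : ℤ) k, (tent M (k - n) - tent M (0 - n)) ^ 2
      = 2 * (tentCorr M 0 - tentCorr M k) := by
  have hk : Finset.Icc ((k : ℤ) + 1 - M) k ⊆ Finset.Icc (1 - M : ℤ) k := fun n hn => by
    simp only [Finset.mem_Icc] at hn ⊢; omega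
  have h0 : Finset.Icc ((0 : ℤ) + 1 - M) 0 ⊆ Finset.Icc (1 - M : ℤ) k := fun n hn => by
    simp only [Finset.mem_Icc] at hn ⊢; omega
  have hkk := sum_tent_mul_tent hk k
  have h00 := sum_tent_mul_tent h0 0
  have hk0 := sum_tent_mul_tent hk 0
  simp only [sub_self, sub_zero] at hkk h00 hk0
  rw [Finset.sum_congr rfl fun n _ => sub_sq' (tent M (k - n)) (tent M (0 - n)),
    Finset.sum_sub_distrib, Finset.sum_add_distrib]
  simp only [sq, mul_assoc, ← Finset.mul_sum]
  rw [hkk, h00, hk0]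
  ring

lemma tentCorr_le_tentCorr_zero (k : ℕ) : tentCorr M k ≤ tentCorr M 0 := by
  have := sum_sq_tent_sub_tent (M := M) k
  have : 0 ≤ ∑ n ∈ Finset.Icc (1 - M : ℤ) k, (tent M (k - n) - tent M (0 - n)) ^ 2 :=
    Finset.sum_nonneg fun _ _ => sq_nonneg _
  linarith

lemma tentCorr_zero_sub_le {k : ℕ} (hk : k ≤ M) : tentCorr M 0 - tentCorr M k ≤ M * k ^ 2 := by
  have hterm : ∀ n ∈ Finset.Icc (1 - M : ℤ) k,
      (tent M (k - n) - tent M (0 - n)) ^ 2 ≤ (k : ℤ) ^ 2 := fun n _ => by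
    simpa using sq_le_sq.mpr (abs_tent_sub_tent_le (M := M) (k - n) (0 - n))
  have hsum := Finset.sum_le_card_nsmul _ _ _ hterm
  rw [sum_sq_tent_sub_tent, Int.card_Icc, nsmul_eq_mul,
    show ((k + 1 - (1 - M) : ℤ).toNat : ℤ) = M + k by omega] at hsum
  nlinarith

lemma cube_le_tentCorr_zero : (M : ℤ) ^ 3 ≤ 27 * tentCorr M 0 := by
  set q : ℤ := (M : ℤ) / 3
  have hmid : ∀ m ∈ Finset.Ico q (M - q), (q + 1) ^ 2 ≤ tent M m * tent M (m - 0) := by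
    intro m hm
    simp only [Finset.mem_Ico] at hm
    have : q + 1 ≤ tent M m := by unfold tent; omega
    rw [sub_zero, ← sq]
    exact pow_le_pow_left₀ (by omega) this 2
  have hsub : ∑ m ∈ Finset.Ico q (M - q), tent M m * tent M (m - 0) ≤ tentCorr M 0 :=
    Finset.sum_le_sum_of_subset_of_nonneg
      (fun m hm => by simp only [Finset.mem_Ico] at hm ⊢; omega)
      (fun m _ _ => mul_nonneg (tent_nonneg _) (tent_nonneg _))
  have hcard := Finset.card_nsmul_le_sum _ _ _ hmid
  rw [Int.card_Ico, nsmul_eq_mul,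
    show (((M - q - q : ℤ).toNat : ℕ) : ℤ) = M - 2 * q by omega] at hcard
  have hcube : (M : ℤ) ^ 3 ≤ 27 * ((M - 2 * q) * (q + 1) ^ 2) := by
    have hq : 0 ≤ q := by omega
    have hM : (M : ℤ) = 3 * q ∨ (M : ℤ) = 3 * q + 1 ∨ (M : ℤ) = 3 * q + 2 := by omega
    rcases hM with h | h | h <;> rw [h] <;> nlinarith [sq_nonneg q]
  linarith

lemma tentCorr_zero_pos (hM : 1 ≤ M) : 0 < tentCorr M 0 := by
  have := cube_le_tentCorr_zero (M := M)
  have : (1 : ℤ) ≤ (M : ℤ) ^ 3 := one_le_pow₀ (by exact_mod_cast hM)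
  linarith

lemma sq_mul_tentCorr_zero_sub_le {k : ℕ} (hk : k ≤ M) :
    (M : ℤ) ^ 2 * (tentCorr M 0 - tentCorr M k) ≤ 27 * k ^ 2 * tentCorr M 0 := by
  have hdiff := mul_le_mul_of_nonneg_left (tentCorr_zero_sub_le hk) (sq_nonneg (M : ℤ))
  have hcube := mul_le_mul_of_nonneg_right (cube_le_tentCorr_zero (M := M)) (sq_nonneg (k : ℤ))
  linarith

lemma sum_star_tent_mul_tent {N : ℕ} (i j : Fin (N + 1)) :
    ∑ n ∈ Finset.Icc (1 - M : ℤ) N, star ((tent M (i - n) : ℂ)) * (tent M (j - n) : ℂ)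
      = (tentCorr M ((i : ℤ) - j).natAbs : ℂ) := by
  simp_rw [star_intCast, ← Int.cast_mul, ← Int.cast_sum]
  rw [sum_tent_mul_tent (fun n hn => by simp only [Finset.mem_Icc] at hn ⊢; omega),
    tentCorr_natAbs]

lemma sum_tentCorr_mul_le {N : ℕ} (hM : 1 ≤ M) (hMN : M ≤ N + 1) (x a : ℕ → ℝ)
    (hxa : ∀ k, |x k| ≤ a k) :
    ∑ k ∈ Finset.range (N + 1), (tentCorr M k : ℝ) * x k
      ≤ (tentCorr M 0 : ℝ) * (∑ k ∈ Finset.range (N + 1), x k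
        + 27 / M ^ 2 * ∑ k ∈ Finset.Ico 1 M, k ^ 2 * a k + 27 * ∑ k ∈ Finset.Icc M N, a k) := by
  have hc0 : (0 : ℝ) ≤ tentCorr M 0 := by exact_mod_cast (tentCorr_zero_pos hM).le
  have hcorr (k : ℕ) : ((tentCorr M k : ℝ) - tentCorr M 0) * x k
      ≤ ((tentCorr M 0 : ℝ) - tentCorr M k) * a k := by
    have : (tentCorr M k : ℝ) ≤ tentCorr M 0 := by exact_mod_cast tentCorr_le_tentCorr_zero k
    nlinarith [neg_abs_le (x k), hxa k]
  have hnear : ∀ k ∈ Finset.range M, ((tentCorr M k : ℝ) - tentCorr M 0) * x k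
      ≤ tentCorr M 0 * (27 / M ^ 2 * (k ^ 2 * a k)) := by
    intro k hk
    have hsq : (M : ℝ) ^ 2 * (tentCorr M 0 - tentCorr M k) ≤ 27 * k ^ 2 * tentCorr M 0 := by
      exact_mod_cast sq_mul_tentCorr_zero_sub_le (Finset.mem_range.mp hk).le
    have hdiv : (tentCorr M 0 : ℝ) - tentCorr M k ≤ 27 * k ^ 2 * tentCorr M 0 / M ^ 2 := by
      rw [le_div_iff₀ (by positivity)]; linarith
    calc ((tentCorr M k : ℝ) - tentCorr M 0) * x k
        ≤ ((tentCorr M 0 : ℝ) - tentCorr M k) * a k := hcorr k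
      _ ≤ 27 * k ^ 2 * tentCorr M 0 / M ^ 2 * a k :=
          mul_le_mul_of_nonneg_right hdiv ((abs_nonneg (x k)).trans (hxa k))
      _ = tentCorr M 0 * (27 / M ^ 2 * (k ^ 2 * a k)) := by ring
  have hfar : ∀ k ∈ Finset.Ico M (N + 1), ((tentCorr M k : ℝ) - tentCorr M 0) * x k
      ≤ tentCorr M 0 * (27 * a k) := by
    intro k hk
    have := hcorr k
    rw [tentCorr_eq_zero_of_le (by simp only [Finset.mem_Ico] at hk; omega), Int.cast_zero]
      at this ⊢
    nlinarith [(abs_nonneg (x k)).trans (hxa k)]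
  have hsum : ∑ k ∈ Finset.range (N + 1), (tentCorr M k : ℝ) * x k
      = tentCorr M 0 * ∑ k ∈ Finset.range (N + 1), x k
        + ∑ k ∈ Finset.range M, ((tentCorr M k : ℝ) - tentCorr M 0) * x k
        + ∑ k ∈ Finset.Ico M (N + 1), ((tentCorr M k : ℝ) - tentCorr M 0) * x k := by
    rw [add_assoc, Finset.sum_range_add_sum_Ico _ hMN, Finset.mul_sum, ← Finset.sum_add_distrib]
    exact Finset.sum_congr rfl fun k _ => by ring
  have hnear_sum : ∑ k ∈ Finset.range M, ((tentCorr M k : ℝ) - tentCorr M 0) * x k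
      ≤ tentCorr M 0 * (27 / M ^ 2 * ∑ k ∈ Finset.Ico 1 M, k ^ 2 * a k) := by
    refine (Finset.sum_le_sum hnear).trans_eq ?_
    rw [← Finset.mul_sum, ← Finset.mul_sum, Finset.range_eq_Ico,
      Finset.sum_eq_sum_Ico_succ_bot (by omega)]
    simp
  have hfar_sum : ∑ k ∈ Finset.Ico M (N + 1), ((tentCorr M k : ℝ) - tentCorr M 0) * x k
      ≤ tentCorr M 0 * (27 * ∑ k ∈ Finset.Icc M N, a k) := by
    refine (Finset.sum_le_sum hfar).trans_eq ?_
    rw [← Finset.mul_sum, ← Finset.mul_sum, Finset.Ico_add_one_right_eq_Icc]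
  rw [hsum]
  linarith

end Tent

section CutoffVectors

variable {N M : ℕ} (A : Matrix (Fin (N + 1)) (Fin (N + 1)) ℂ) (ψ : Fin (N + 1) → ℂ)

def cutoffVec (M : ℕ) (ψ : Fin (N + 1) → ℂ) (n : ℤ) : Fin (N + 1) → ℂ :=
  diagonal (fun j => (tent M (j - n) : ℂ)) *ᵥ ψ

lemma cutoffVec_apply_eq_zero {n : ℤ} {j : Fin (N + 1)} (h : (j : ℤ) < n ∨ n + M ≤ j) :
    cutoffVec M ψ n j = 0 := by
  simp [cutoffVec, mulVec_diagonal, tent_eq_zero (M := M) (m := j - n) (by omega)]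

lemma sum_cutoffVec_dotProduct_mulVec :
    ∑ n ∈ Finset.Icc (1 - M : ℤ) N, star (cutoffVec M ψ n) ⬝ᵥ A *ᵥ cutoffVec M ψ n
      = star ψ ⬝ᵥ
        ((of fun i j : Fin (N + 1) => (tentCorr M ((i : ℤ) - j).natAbs : ℂ)) ⊙ A) *ᵥ ψ := by
  unfold cutoffVec
  rw [sum_star_diagonal_mulVec_dotProduct_mulVec]
  simp_rw [sum_star_tent_mul_tent]

lemma sum_re_cutoffVec_dotProduct_self (hψ : star ψ ⬝ᵥ ψ = 1) :
    ∑ n ∈ Finset.Icc (1 - M : ℤ) N, (star (cutoffVec M ψ n) ⬝ᵥ cutoffVec M ψ n).re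
      = tentCorr M 0 := by
  have hdiag : diagonal (of fun i j : Fin (N + 1) => (tentCorr M ((i : ℤ) - j).natAbs : ℂ)).diag
      = (tentCorr M 0 : ℂ) • 1 := by
    ext i j; by_cases h : i = j <;> simp [h]
  have h1 := sum_cutoffVec_dotProduct_mulVec (M := M) 1 ψ
  rw [hadamard_one, hdiag, smul_mulVec, one_mulVec, dotProduct_smul, hψ] at h1
  simp only [one_mulVec] at h1
  rw [← Complex.re_sum, h1]
  simp

lemma sum_re_cutoffVec_dotProduct_mulVec_le (hψ : star ψ ⬝ᵥ ψ = 1) (hM : 1 ≤ M)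
    (hMN : M ≤ N + 1) :
    ∑ n ∈ Finset.Icc (1 - M : ℤ) N, (star (cutoffVec M ψ n) ⬝ᵥ A *ᵥ cutoffVec M ψ n).re
      ≤ ((star ψ ⬝ᵥ A *ᵥ ψ).re
          + 27 / M ^ 2 * ∑ k ∈ Finset.Ico 1 M, k ^ 2 * ‖star ψ ⬝ᵥ offDiagPart A k *ᵥ ψ‖
          + 27 * ∑ k ∈ Finset.Icc M N, ‖star ψ ⬝ᵥ offDiagPart A k *ᵥ ψ‖)
        * ∑ n ∈ Finset.Icc (1 - M : ℤ) N, (star (cutoffVec M ψ n) ⬝ᵥ cutoffVec M ψ n).re := by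
  rw [sum_re_cutoffVec_dotProduct_self ψ hψ, mul_comm, ← Complex.re_sum,
    sum_cutoffVec_dotProduct_mulVec, dotProduct_hadamard_mulVec A ψ fun k => (tentCorr M k : ℂ),
    Complex.re_sum, dotProduct_mulVec_eq_sum_offDiagPart A ψ, Complex.re_sum]
  simp only [← Complex.ofReal_intCast, Complex.re_ofReal_mul]
  exact sum_tentCorr_mul_le hM hMN _ _ fun k => Complex.abs_re_le_norm _

end CutoffVectors

/-- **Localization of large matrices.** For a Hermitian `(N+1)×(N+1)` matrix `A`, a unit
vector `ψ`, `d_k = ⟨ψ, A^k ψ⟩`, `λ = ⟨ψ, Aψ⟩`, and any `1 ≤ M ≤ N+1`, there are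
`n ≤ N+1-M` and a unit vector `φ` supported on `M` consecutive indices starting at `n`
with `⟨φ, Aφ⟩ ≤ λ + (C/M²) Σ_{k=1}^{M-1} k²|d_k| + C Σ_{k=M}^N |d_k|` for a universal
constant `C`. -/
theorem localization_of_large_matrices :
    ∃ C : ℝ, 0 < C ∧
      ∀ (N : ℕ) (A : Matrix (Fin (N + 1)) (Fin (N + 1)) ℂ), A.IsHermitian →
      ∀ ψ : Fin (N + 1) → ℂ, star ψ ⬝ᵥ ψ = 1 →
      ∀ M : ℕ, 1 ≤ M → M ≤ N + 1 →
      ∃ n : ℕ, n ≤ N + 1 - M ∧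
      ∃ φ : Fin (N + 1) → ℂ, star φ ⬝ᵥ φ = 1 ∧
        (∀ j : Fin (N + 1), ((j : ℕ) < n ∨ n + M ≤ (j : ℕ)) → φ j = 0) ∧
        (star φ ⬝ᵥ A.mulVec φ).re ≤
          (star ψ ⬝ᵥ A.mulVec ψ).re +
          (C / (M : ℝ) ^ 2) * ∑ k ∈ Finset.Ico 1 M,
            (k : ℝ) ^ 2 * ‖star ψ ⬝ᵥ (offDiagPart A k).mulVec ψ‖ +
          C * ∑ k ∈ Finset.Icc M N,
            ‖star ψ ⬝ᵥ (offDiagPart A k).mulVec ψ‖ := by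
  refine ⟨27, by norm_num, fun N A _ ψ hψ M hM hMN => ?_⟩
  obtain ⟨n, hn, c, hunit, hle⟩ := exists_smul_re_dotProduct_mulVec_le A _ (cutoffVec M ψ)
    (by rw [sum_re_cutoffVec_dotProduct_self ψ hψ]; exact_mod_cast tentCorr_zero_pos hM)
    (sum_re_cutoffVec_dotProduct_mulVec_le A ψ hψ hM hMN)
  have hnN := Finset.mem_Icc.mp hn
  -- `cutoffVec M ψ n` lives on `[n, n + M) ∩ [0, N]`, inside the window starting at the clamped `n`
  refine ⟨(min (N + 1 - M : ℤ) (max 0 n)).toNat, by omega, c • cutoffVec M ψ n, hunit,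
    fun j hj => ?_, hle⟩
  rw [Pi.smul_apply, cutoffVec_apply_eq_zero ψ (by omega), smul_zero]
end

section
/- Explicit Bogolubov integral: ∫₀^∞ ( 1 + x⁴ - x²√(2 + x⁴) ) dx = 2^{3/4} √π Γ(3/4) / (5 Γ(5/4)). -/
/-!
The integrand `f x = 1 + x⁴ - x²√(2 + x⁴)` equals `(√(2 + x⁴) - x²)² / 2`, and it is the root
below `1` of `(1 - s)² = 2 s x⁴`. Hence `s ↦ x = 2^{-1/4} s^{-1/4} (1 - s)^{1/2}` is a bijection
`(0, 1) → (0, ∞)` inverse to `f`, and substituting turns `f x dx` into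
`2^{-9/4} (1 + s) s^{-1/4} (1 - s)^{-1/2} ds`. The result is a sum of the Beta integrals
`B(3/4, 1/2)` and `B(7/4, 1/2)`, which `Γ(1/2) = √π` and `Γ(z + 1) = z Γ(z)` reduce to the
stated value.
-/

open MeasureTheory Real

open Set

section Beta

variable {a b : ℝ}

lemma ofReal_rpow_mul_one_sub_rpow {s : ℝ} (hs : s ∈ Icc (0 : ℝ) 1) :
    ((s ^ (a - 1) * (1 - s) ^ (b - 1) : ℝ) : ℂ) =
      (s : ℂ) ^ ((a : ℂ) - 1) * (1 - (s : ℂ)) ^ ((b : ℂ) - 1) := by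
  push_cast [Complex.ofReal_cpow hs.1, Complex.ofReal_cpow (sub_nonneg.2 hs.2)]
  rfl

lemma integrableOn_rpow_mul_one_sub_rpow (ha : 0 < a) (hb : 0 < b) :
    IntegrableOn (fun s : ℝ => s ^ (a - 1) * (1 - s) ^ (b - 1)) (Ioo 0 1) := by
  have h := Complex.betaIntegral_convergent (u := a) (v := b) (by simpa) (by simpa)
  rw [intervalIntegrable_iff_integrableOn_Ioo_of_le zero_le_one] at h
  refine IntegrableOn.congr_fun (Integrable.re h) (fun s hs => ?_) measurableSet_Ioo
  simp only [RCLike.re_to_complex, ← ofReal_rpow_mul_one_sub_rpow (Ioo_subset_Icc_self hs),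
    Complex.ofReal_re]

lemma integral_rpow_mul_one_sub_rpow (ha : 0 < a) (hb : 0 < b) :
    ∫ s in Ioo 0 1, s ^ (a - 1) * (1 - s) ^ (b - 1) = Gamma a * Gamma b / Gamma (a + b) := by
  have h := Complex.betaIntegral_eq_Gamma_mul_div a b (by simpa) (by simpa)
  rw [Complex.betaIntegral, intervalIntegral.integral_of_le zero_le_one,
    integral_Ioc_eq_integral_Ioo,
    setIntegral_congr_fun measurableSet_Ioo
      (fun s hs => (ofReal_rpow_mul_one_sub_rpow (Ioo_subset_Icc_self hs)).symm),
    integral_complex_ofReal, ← Complex.ofReal_add, Complex.Gamma_ofReal, Complex.Gamma_ofReal,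
    Complex.Gamma_ofReal] at h
  exact_mod_cast h

end Beta

noncomputable def bogolubovIntegrand (x : ℝ) : ℝ := 1 + x ^ 4 - x ^ 2 * √(2 + x ^ 4)

lemma two_mul_bogolubovIntegrand (x : ℝ) :
    2 * bogolubovIntegrand x = (√(2 + x ^ 4) - x ^ 2) ^ 2 := by
  have := sq_sqrt (show (0 : ℝ) ≤ 2 + x ^ 4 by positivity)
  unfold bogolubovIntegrand
  linear_combination -this

lemma sq_lt_sqrt_two_add_pow_four (x : ℝ) : x ^ 2 < √(2 + x ^ 4) := by
  rw [lt_sqrt (by positivity)]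
  linarith

lemma bogolubovIntegrand_pos (x : ℝ) : 0 < bogolubovIntegrand x := by
  have := two_mul_bogolubovIntegrand x
  have := pow_pos (sub_pos.2 (sq_lt_sqrt_two_add_pow_four x)) 2
  linarith

lemma bogolubovIntegrand_lt_one {x : ℝ} (hx : x ≠ 0) : bogolubovIntegrand x < 1 := by
  have := mul_lt_mul_of_pos_left (sq_lt_sqrt_two_add_pow_four x) (by positivity : 0 < x ^ 2)
  unfold bogolubovIntegrand
  linarith

lemma one_sub_bogolubovIntegrand_sq (x : ℝ) :
    (1 - bogolubovIntegrand x) ^ 2 = x ^ 4 * (2 * bogolubovIntegrand x) := by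
  rw [two_mul_bogolubovIntegrand,
    show 1 - bogolubovIntegrand x = x ^ 2 * (√(2 + x ^ 4) - x ^ 2) by
      unfold bogolubovIntegrand; ring]
  ring

lemma bogolubovIntegrand_eq_iff {x s : ℝ} (hs0 : 0 < s) (hs1 : s < 1) :
    bogolubovIntegrand x = s ↔ x ^ 4 = (1 - s) ^ 2 / (2 * s) := by
  rw [eq_div_iff (by positivity)]
  constructor
  · rintro rfl
    exact (one_sub_bogolubovIntegrand_sq x).symm
  · intro h
    have hroots :
        (bogolubovIntegrand x - s) * (bogolubovIntegrand x + s - 2 - 2 * x ^ 4) = 0 := by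
      linear_combination one_sub_bogolubovIntegrand_sq x + h
    have hle : bogolubovIntegrand x ≤ 1 + x ^ 4 := by
      have : 0 ≤ x ^ 2 * √(2 + x ^ 4) := by positivity
      unfold bogolubovIntegrand
      linarith
    rcases mul_eq_zero.1 hroots with hf | hf
    · linarith
    · nlinarith [pow_nonneg (sq_nonneg x) 2]

noncomputable def bogolubovSubst (s : ℝ) : ℝ :=
  2 ^ (-1/4 : ℝ) * s ^ (-1/4 : ℝ) * (1 - s) ^ (1/2 : ℝ)

lemma bogolubovSubst_pos {s : ℝ} (hs : s ∈ Ioo 0 1) : 0 < bogolubovSubst s :=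
  mul_pos (mul_pos (by positivity) (rpow_pos_of_pos hs.1 _)) (rpow_pos_of_pos (sub_pos.2 hs.2) _)

lemma bogolubovSubst_pow_four {s : ℝ} (hs : s ∈ Ioo 0 1) :
    bogolubovSubst s ^ 4 = (1 - s) ^ 2 / (2 * s) := by
  obtain ⟨hs0, hs1⟩ := hs
  have h1s : 0 ≤ 1 - s := by linarith
  rw [bogolubovSubst, ← rpow_natCast, mul_rpow (by positivity) (by positivity),
    mul_rpow (by positivity) (by positivity), ← rpow_mul (by positivity), ← rpow_mul hs0.le,
    ← rpow_mul h1s]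
  norm_num [rpow_neg_one]
  field_simp

lemma bogolubovIntegrand_bogolubovSubst {s : ℝ} (hs : s ∈ Ioo 0 1) :
    bogolubovIntegrand (bogolubovSubst s) = s :=
  (bogolubovIntegrand_eq_iff hs.1 hs.2).2 (bogolubovSubst_pow_four hs)

lemma bijOn_bogolubovSubst : BijOn bogolubovSubst (Ioo 0 1) (Ioi 0) := by
  have hmaps : MapsTo bogolubovIntegrand (Ioi 0) (Ioo 0 1) := fun x hx =>
    ⟨bogolubovIntegrand_pos x, bogolubovIntegrand_lt_one (ne_of_gt hx)⟩
  refine InvOn.bijOn ⟨fun s hs => bogolubovIntegrand_bogolubovSubst hs, fun x hx => ?_⟩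
    (fun s hs => bogolubovSubst_pos hs) hmaps
  have hs := hmaps hx
  refine (pow_left_inj₀ (bogolubovSubst_pos hs).le (le_of_lt hx) four_ne_zero).1 ?_
  rw [bogolubovSubst_pow_four hs, ← (bogolubovIntegrand_eq_iff hs.1 hs.2).1 rfl]

lemma hasDerivAt_bogolubovSubst {s : ℝ} (hs : s ∈ Ioo 0 1) :
    HasDerivAt bogolubovSubst
      (-(2 ^ (-1/4 : ℝ) / 4 * (1 + s) * s ^ (-5/4 : ℝ) * (1 - s) ^ (-1/2 : ℝ))) s := by
  obtain ⟨hs0, hs1⟩ := hs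
  have h1s : 0 < 1 - s := sub_pos.2 hs1
  have hA := hasDerivAt_rpow_const (p := (-1/4 : ℝ)) (Or.inl hs0.ne')
  have hB := (hasDerivAt_rpow_const (p := (1/2 : ℝ)) (Or.inl h1s.ne')).comp s
    ((hasDerivAt_id s).const_sub 1)
  have hs' : s ^ (-1/4 : ℝ) = s ^ (-5/4 : ℝ) * s := by rw [← rpow_add_one hs0.ne']; norm_num
  have h1s' : (1 - s) ^ (1/2 : ℝ) = (1 - s) ^ (-1/2 : ℝ) * (1 - s) := by
    rw [← rpow_add_one h1s.ne']; norm_num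
  have hφ :
      bogolubovSubst = fun t => 2 ^ (-1/4 : ℝ) * (t ^ (-1/4 : ℝ) * (1 - t) ^ (1/2 : ℝ)) := by
    funext t
    rw [bogolubovSubst, mul_assoc]
  rw [hφ]
  refine ((hA.mul hB).const_mul _).congr_deriv ?_
  rw [Function.comp_apply, show (-1/4 : ℝ) - 1 = -5/4 by norm_num,
    show (1/2 : ℝ) - 1 = -1/2 by norm_num, hs', h1s']
  ring

lemma integral_bogolubovIntegrand_eq_integral_Ioo :
    ∫ x in Ioi 0, bogolubovIntegrand x =
      ∫ s in Ioo 0 1, 2 ^ (-1/4 : ℝ) / 4 *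
        (s ^ ((3/4 : ℝ) - 1) * (1 - s) ^ ((1/2 : ℝ) - 1) +
          s ^ ((7/4 : ℝ) - 1) * (1 - s) ^ ((1/2 : ℝ) - 1)) := by
  rw [← bijOn_bogolubovSubst.image_eq, integral_image_eq_integral_abs_deriv_smul measurableSet_Ioo
    (fun s hs => (hasDerivAt_bogolubovSubst hs).hasDerivWithinAt) bijOn_bogolubovSubst.injOn]
  refine setIntegral_congr_fun measurableSet_Ioo fun s hs => ?_
  obtain ⟨hs0, hs1⟩ := hs
  have h1s : 0 < (1 - s) ^ (-1/2 : ℝ) := rpow_pos_of_pos (sub_pos.2 hs1) _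
  have hs' : s ^ (-1/4 : ℝ) = s ^ (-5/4 : ℝ) * s := by rw [← rpow_add_one hs0.ne']; norm_num
  have hs'' : s ^ (3/4 : ℝ) = s ^ (-1/4 : ℝ) * s := by rw [← rpow_add_one hs0.ne']; norm_num
  rw [smul_eq_mul, bogolubovIntegrand_bogolubovSubst ⟨hs0, hs1⟩, abs_neg,
    abs_of_pos (by positivity), show (3/4 : ℝ) - 1 = -1/4 by norm_num,
    show (7/4 : ℝ) - 1 = 3/4 by norm_num,
    show (1/2 : ℝ) - 1 = -1/2 by norm_num, hs'', hs']
  ring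

/-- **Explicit Bogolubov integral.**
`∫₀^∞ (1 + x⁴ - x²√(2 + x⁴)) dx = 2^{3/4} √π Γ(3/4) / (5 Γ(5/4))`. -/
theorem bogolubov_integral :
    ∫ x in Set.Ioi (0 : ℝ), (1 + x ^ 4 - x ^ 2 * Real.sqrt (2 + x ^ 4)) =
      (2 : ℝ) ^ ((3 : ℝ) / 4) * Real.sqrt π * Real.Gamma (3 / 4) /
        (5 * Real.Gamma (5 / 4)) := by
  have hbeta {a : ℝ} (ha : 0 < a) := integrableOn_rpow_mul_one_sub_rpow ha one_half_pos
  have hΓ74 : Gamma (7/4) = 3/4 * Gamma (3/4) := by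
    rw [show (7/4 : ℝ) = 3/4 + 1 by norm_num, Gamma_add_one (by norm_num)]
  have hΓ94 : Gamma (7/4 + 1/2) = 5/4 * Gamma (5/4) := by
    rw [show (7/4 + 1/2 : ℝ) = 5/4 + 1 by norm_num, Gamma_add_one (by norm_num)]
  have h2 : (2 : ℝ) ^ (3/4 : ℝ) = 2 ^ (-1/4 : ℝ) * 2 := by
    rw [← rpow_add_one two_ne_zero]; norm_num
  have hΓ54 : 0 < Gamma (5/4) := Gamma_pos_of_pos (by norm_num)
  calc _ = ∫ x in Ioi 0, bogolubovIntegrand x := rfl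
    _ = _ := integral_bogolubovIntegrand_eq_integral_Ioo
    _ = 2 ^ (-1/4 : ℝ) / 4 * (Gamma (3/4) * Gamma (1/2) / Gamma (3/4 + 1/2) +
          Gamma (7/4) * Gamma (1/2) / Gamma (7/4 + 1/2)) := by
      rw [integral_const_mul, integral_add (hbeta (by norm_num)) (hbeta (by norm_num)),
        integral_rpow_mul_one_sub_rpow (by norm_num) one_half_pos,
        integral_rpow_mul_one_sub_rpow (by norm_num) one_half_pos]
    _ = _ := by
      rw [hΓ74, hΓ94, Gamma_one_half_eq, h2]
      norm_num
      field_simp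
      ring
end

section
/- Variational upper bound for GP with Dyson pair function (norm estimate): Let Ψ(x₁,…,x_n) = G·F with G = ψ(z₁,…,z_n)∏ⱼ b(x⊥ⱼ) normalized, and F = ∏_{i<j} f(|xᵢ-xⱼ|) where 0 ≤ f ≤ 1 and f(t) = 1 for t ≥ R. If the two-particle density ρ⁽²⁾ of ψ is normalized and b ∈ L⁴(ℝ²) with scaling b_r(x) = r^{-1}b(x/r), then ⟨Ψ, Ψ⟩ ≥ 1 - (n(n-1)/2)(πR²/r²)‖b‖₄⁴. -/
/-!
Either two particles are at transverse distance at most `R`, or every factor of `F` equals `1`;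
so pointwise `1 ≤ F² + ∑_{i<j} χ(|x⊥ᵢ - x⊥ⱼ| ≤ R)`, whence `1 = ∫ G² ≤ ⟨Ψ,Ψ⟩ + ∑_{i<j} ∫ G² χᵢⱼ`.
In `∫ G² χᵢⱼ` the factor `ψ²` and the transverse factors of the other particles integrate to `1`.
After `b_r(x⊥ᵢ)² b_r(x⊥ⱼ)² ≤ (b_r(x⊥ᵢ)⁴ + b_r(x⊥ⱼ)⁴) / 2`, the particle without the fourth power
only sees the indicator of a disc of area `πR²`, which leaves `πR² ‖b_r‖₄⁴ = πR² r⁻² ‖b‖₄⁴`.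
All of this is done with lower Lebesgue integrals; `F² ≤ 1` makes `⟨Ψ,Ψ⟩` finite at the end.
-/

open MeasureTheory Finset
open scoped ENNReal

theorem Finset.one_le_prod_add_sum {ι R : Type*} [CommSemiring R] [PartialOrder R]
    [CanonicallyOrderedAdd R] [IsOrderedRing R] (s : Finset ι) {a c : ι → R}
    (hac : ∀ i ∈ s, 1 ≤ a i ∨ 1 ≤ c i) :
    1 ≤ ∏ i ∈ s, a i + ∑ i ∈ s, c i := by
  by_cases h : ∃ i ∈ s, 1 ≤ c i
  · obtain ⟨i, hi, hci⟩ := h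
    exact hci.trans <| (single_le_sum (fun j _ => zero_le) hi).trans le_add_self
  · have ha : ∀ i ∈ s, 1 ≤ a i := fun i hi => (hac i hi).resolve_right fun hci => h ⟨i, hi, hci⟩
    exact (one_le_prod ha).trans le_self_add

theorem ENNReal.two_mul_le_add_sq (a b : ℝ≥0∞) : 2 * a * b ≤ a ^ 2 + b ^ 2 := by
  rcases eq_or_ne a ⊤ with rfl | ha
  · simp
  rcases eq_or_ne b ⊤ with rfl | hb
  · simp
  lift a to NNReal using ha
  lift b to NNReal using hb
  exact_mod_cast _root_.two_mul_le_add_sq a b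

section Marginal

variable {δ : Type*} [DecidableEq δ] {X : δ → Type*} [∀ i, MeasurableSpace (X i)]
  (μ : ∀ i, Measure (X i))

theorem lmarginal_const_mul (r : ℝ≥0∞) {f : (∀ i, X i) → ℝ≥0∞} (hf : Measurable f)
    (s : Finset δ) (x : ∀ i, X i) :
    (∫⋯∫⁻_s, (fun y => r * f y) ∂μ) x = r * (∫⋯∫⁻_s, f ∂μ) x :=
  lintegral_const_mul _ (hf.comp measurable_updateFinset)

theorem lmarginal_prod [∀ i, SigmaFinite (μ i)] {f : ∀ i, X i → ℝ≥0∞}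
    (hf : ∀ i, Measurable (f i)) (s : Finset δ) (x : ∀ i, X i) :
    (∫⋯∫⁻_s, (fun y => ∏ i ∈ s, f i (y i)) ∂μ) x = ∏ i ∈ s, ∫⁻ t, f i t ∂μ i := by
  induction s using Finset.cons_induction generalizing x with
  | empty => simp
  | cons k s hk ih =>
    have hsplit : ∀ (y : ∀ i, X i) (t : X k),
        ∏ i ∈ insert k s, f i (Function.update y k t i) = f k t * ∏ i ∈ s, f i (y i) := by
      intro y t
      rw [prod_insert hk, Function.update_self]
      congr 1
      exact prod_congr rfl fun i hi => by rw [Function.update_of_ne (ne_of_mem_of_not_mem hi hk)]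
    rw [cons_eq_insert, prod_insert hk, lmarginal_insert' _ (by fun_prop) hk]
    simp only [hsplit]
    simp_rw [lintegral_mul_const _ (hf k)]
    rw [lmarginal_const_mul μ _ (by fun_prop), ih]

end Marginal

section Pi

variable {ι α : Type*} [Fintype ι] [MeasurableSpace α] {μ : Measure α} [SigmaFinite μ]

theorem lintegral_fintype_prod_eq_prod {c : ι → α → ℝ≥0∞} (hc : ∀ k, Measurable (c k)) :
    ∫⁻ u, ∏ k, c k (u k) ∂Measure.pi (fun _ => μ) = ∏ k, ∫⁻ y, c k y ∂μ := by
  classical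
  rcases isEmpty_or_nonempty (ι → α) with hα | ⟨⟨x⟩⟩
  · obtain ⟨k, hk⟩ := isEmpty_pi.1 hα
    rw [lintegral_of_isEmpty, prod_eq_zero (mem_univ k) (lintegral_of_isEmpty _ _)]
  · rw [lintegral_eq_lmarginal_univ x, lmarginal_prod _ hc]

variable [DecidableEq ι]

theorem lintegral_prod_erase_mul_kernel {c : ι → α → ℝ≥0∞} (hc : ∀ k, Measurable (c k))
    {K : α → α → ℝ≥0∞} (hK : Measurable (Function.uncurry K)) {V : ℝ≥0∞}
    (hV : ∀ a, ∫⁻ y, K a y ∂μ = V) {i j : ι} (hij : i ≠ j) :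
    ∫⁻ u, (∏ k ∈ univ.erase j, c k (u k)) * K (u i) (u j) ∂Measure.pi (fun _ => μ) =
      V * ∏ k ∈ univ.erase j, ∫⁻ y, c k y ∂μ := by
  rcases isEmpty_or_nonempty α with hα | ⟨⟨a⟩⟩
  · have : IsEmpty (ι → α) := ⟨fun u => hα.elim (u i)⟩
    rw [lintegral_of_isEmpty,
      prod_eq_zero (mem_erase.2 ⟨hij, mem_univ i⟩) (lintegral_of_isEmpty _ _), mul_zero]
  have hinner : ∀ w : ι → α, ∫⁻ t, (∏ k ∈ univ.erase j, c k (Function.update w j t k)) *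
      K (Function.update w j t i) (Function.update w j t j) ∂μ =
        V * ∏ k ∈ univ.erase j, c k (w k) := by
    intro w
    have hprod : ∀ t, ∏ k ∈ univ.erase j, c k (Function.update w j t k) =
        ∏ k ∈ univ.erase j, c k (w k) :=
      fun t => prod_congr rfl fun k hk => by rw [Function.update_of_ne (ne_of_mem_erase hk)]
    simp only [hprod, Function.update_of_ne hij, Function.update_self]
    rw [lintegral_const_mul _ (by fun_prop), hV, mul_comm]
  rw [lintegral_eq_lmarginal_univ (fun _ => a), lmarginal_erase' _ (by fun_prop) (mem_univ j)]
  simp only [hinner]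
  rw [lmarginal_const_mul _ _ (by fun_prop), lmarginal_prod _ hc]

theorem lintegral_sq_mul_prod_erase_erase_mul_kernel {g : α → ℝ≥0∞} (hg : Measurable g)
    {K : α → α → ℝ≥0∞} (hK : Measurable (Function.uncurry K)) {V : ℝ≥0∞}
    (hV : ∀ a, ∫⁻ y, K a y ∂μ = V) {i j : ι} (hij : i ≠ j) :
    ∫⁻ u, g (u i) ^ 2 * (∏ k ∈ (univ.erase j).erase i, g (u k)) * K (u i) (u j)
        ∂Measure.pi (fun _ => μ) =
      V * (∫⁻ y, g y ^ 2 ∂μ) * (∫⁻ y, g y ∂μ) ^ (Fintype.card ι - 2) := by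
  set c := Function.update (fun _ => g) i (fun y => g y ^ 2)
  have hi : i ∈ univ.erase j := mem_erase.2 ⟨hij, mem_univ i⟩
  have hprod : ∀ F : ι → (α → ℝ≥0∞) → ℝ≥0∞, ∏ k ∈ univ.erase j, F k (c k) =
      F i (fun y => g y ^ 2) * ∏ k ∈ (univ.erase j).erase i, F k g := by
    intro F
    rw [← mul_prod_erase _ _ hi]
    simp only [c, Function.update_self]
    congr 1
    exact prod_congr rfl fun k hk => by rw [Function.update_of_ne (ne_of_mem_erase hk)]
  have hc : ∀ k, Measurable (c k) := by
    intro k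
    rcases eq_or_ne k i with rfl | hk
    · simp only [c, Function.update_self]; fun_prop
    · simp only [c, Function.update_of_ne hk]; exact hg
  calc _ = ∫⁻ u, (∏ k ∈ univ.erase j, c k (u k)) * K (u i) (u j) ∂Measure.pi (fun _ => μ) :=
        lintegral_congr fun u => by rw [hprod fun k h => h (u k)]
    _ = _ := by
        rw [lintegral_prod_erase_mul_kernel hc hK hV hij, hprod fun _ h => ∫⁻ y, h y ∂μ,
          prod_const, card_erase_of_mem hi, card_erase_of_mem (mem_univ j), card_univ,
          Nat.sub_sub, mul_assoc]

theorem lintegral_prod_mul_kernel_le {g : α → ℝ≥0∞} (hg : Measurable g)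
    {K : α → α → ℝ≥0∞} (hK : Measurable (Function.uncurry K)) (hKsymm : ∀ a b, K a b = K b a)
    {V : ℝ≥0∞} (hV : ∀ a, ∫⁻ y, K a y ∂μ = V) {i j : ι} (hij : i ≠ j) :
    ∫⁻ u, (∏ k, g (u k)) * K (u i) (u j) ∂Measure.pi (fun _ => μ) ≤
      V * (∫⁻ y, g y ^ 2 ∂μ) * (∫⁻ y, g y ∂μ) ^ (Fintype.card ι - 2) := by
  have hsplit : ∀ u : ι → α,
      ∏ k, g (u k) = g (u i) * g (u j) * ∏ k ∈ (univ.erase j).erase i, g (u k) := by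
    intro u
    rw [← mul_prod_erase univ _ (mem_univ j),
      ← mul_prod_erase _ _ (mem_erase.2 ⟨hij, mem_univ i⟩)]
    ring
  have hpt : ∀ u : ι → α, 2 * ((∏ k, g (u k)) * K (u i) (u j)) ≤
      g (u i) ^ 2 * (∏ k ∈ (univ.erase j).erase i, g (u k)) * K (u i) (u j) +
        g (u j) ^ 2 * (∏ k ∈ (univ.erase i).erase j, g (u k)) * K (u j) (u i) := by
    intro u
    rw [hsplit, erase_right_comm (a := i), hKsymm (u j)]
    calc _ = 2 * g (u i) * g (u j) * ((∏ k ∈ (univ.erase j).erase i, g (u k)) * K (u i) (u j)) := by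
          ring
      _ ≤ (g (u i) ^ 2 + g (u j) ^ 2) *
            ((∏ k ∈ (univ.erase j).erase i, g (u k)) * K (u i) (u j)) := by
          gcongr
          exact ENNReal.two_mul_le_add_sq _ _
      _ = _ := by ring
  rw [← ENNReal.mul_le_mul_iff_right two_ne_zero ENNReal.ofNat_ne_top,
    ← lintegral_const_mul _ (by fun_prop)]
  calc _ ≤ _ := lintegral_mono hpt
    _ = _ := by
      rw [lintegral_add_left (by fun_prop), two_mul,
        lintegral_sq_mul_prod_erase_erase_mul_kernel hg hK hV hij,
        lintegral_sq_mul_prod_erase_erase_mul_kernel hg hK hV hij.symm]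

end Pi

theorem lintegral_comp_arrowProd_mul {ι α β : Type*} [Fintype ι] [MeasureSpace α]
    [MeasureSpace β] [SigmaFinite (volume : Measure α)] [SigmaFinite (volume : Measure β)]
    {g : (ι → α) → ℝ≥0∞} {h : (ι → β) → ℝ≥0∞} (hg : AEMeasurable g) (hh : AEMeasurable h) :
    ∫⁻ x : ι → α × β, g (fun i => (x i).1) * h (fun i => (x i).2) = (∫⁻ u, g u) * ∫⁻ z, h z := by
  rw [← lintegral_prod_mul hg hh, ← Measure.volume_eq_prod,
    ← (volume_measurePreserving_arrowProdEquivProdArrow α β ι).lintegral_comp_emb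
      (MeasurableEquiv.measurableEmbedding _)]
  rfl

theorem lintegral_ofReal_eq_one {α : Type*} [MeasurableSpace α] {μ : Measure α} {f : α → ℝ}
    (hf : 0 ≤ f) (h : ∫ x, f x ∂μ = 1) : ∫⁻ x, ENNReal.ofReal (f x) ∂μ = 1 := by
  rw [← ofReal_integral_eq_lintegral_ofReal (.of_integral_ne_zero (by simp [h]))
    (.of_forall hf), h, ENNReal.ofReal_one]

theorem lintegral_ofReal_rescale_pow {E : Type*} [NormedAddCommGroup E] [NormedSpace ℝ E]
    [FiniteDimensional ℝ E] [MeasurableSpace E] [BorelSpace E] {μ : Measure E}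
    [μ.IsAddHaarMeasure] {b : E → ℝ} {p : ℕ} (hp : Even p)
    (hb : Integrable (fun y => b y ^ p) μ) {r : ℝ} (hr : 0 < r) :
    ∫⁻ x, ENNReal.ofReal ((r⁻¹ * b (r⁻¹ • x)) ^ p) ∂μ =
      ENNReal.ofReal (r ^ Module.finrank ℝ E * r⁻¹ ^ p * ∫ y, b y ^ p ∂μ) := by
  simp_rw [mul_pow]
  rw [← ofReal_integral_eq_lintegral_ofReal, integral_const_mul,
    Measure.integral_comp_inv_smul_of_nonneg μ (fun y => b y ^ p) hr.le, smul_eq_mul]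
  · ring_nf
  · exact (hb.comp_smul (inv_ne_zero hr.ne')).const_mul _
  · exact .of_forall fun x => mul_nonneg (hp.pow_nonneg _) (hp.pow_nonneg _)

theorem measurable_indicator_closedBall {X : Type*} [PseudoMetricSpace X] [MeasurableSpace X]
    [OpensMeasurableSpace X] [SecondCountableTopology X] (R : ℝ) :
    Measurable (Function.uncurry fun a y : X =>
      (Metric.closedBall a R).indicator (1 : X → ℝ≥0∞) y) := by
  have : (Function.uncurry fun a y : X => (Metric.closedBall a R).indicator (1 : X → ℝ≥0∞) y) =
      {p : X × X | dist p.2 p.1 ≤ R}.indicator 1 := by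
    ext ⟨a, y⟩
    simp [Set.indicator, Metric.mem_closedBall]
  rw [this]
  exact measurable_one.indicator (measurableSet_le (by fun_prop) measurable_const)

section Trial

variable {n : ℕ} {E : Type*} [NormedAddCommGroup E]

noncomputable def productWaveFunction [NormedSpace ℝ E] (ψ : (Fin n → ℝ) → ℝ) (b : E → ℝ)
    (r : ℝ) (x : Fin n → E × ℝ) : ℝ :=
  ψ (fun i => (x i).2) * ∏ i, r⁻¹ * b (r⁻¹ • (x i).1)

noncomputable def dysonFactor (f : ℝ → ℝ) (x : Fin n → E × ℝ) : ℝ :=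
  ∏ i, ∏ j, if i < j then f (Real.sqrt (‖(x i).1 - (x j).1‖ ^ 2 + ((x i).2 - (x j).2) ^ 2))
    else 1

noncomputable def trialWaveFunction [NormedSpace ℝ E] (ψ : (Fin n → ℝ) → ℝ) (b : E → ℝ) (r : ℝ)
    (f : ℝ → ℝ) (x : Fin n → E × ℝ) : ℝ :=
  productWaveFunction ψ b r x * dysonFactor f x

theorem measurable_productWaveFunction [NormedSpace ℝ E] [MeasurableSpace E] [BorelSpace E]
    {b : E → ℝ} {ψ : (Fin n → ℝ) → ℝ} {r : ℝ} (hbmeas : Measurable b) (hψmeas : Measurable ψ) :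
    Measurable (productWaveFunction ψ b r) := by
  unfold productWaveFunction
  fun_prop

theorem ofReal_productWaveFunction_sq [NormedSpace ℝ E] {b : E → ℝ} {ψ : (Fin n → ℝ) → ℝ} {r : ℝ}
    (x : Fin n → E × ℝ) :
    ENNReal.ofReal (productWaveFunction ψ b r x ^ 2) =
      (∏ i, ENNReal.ofReal ((r⁻¹ * b (r⁻¹ • (x i).1)) ^ 2)) *
        ENNReal.ofReal (ψ (fun i => (x i).2) ^ 2) := by
  rw [productWaveFunction, mul_pow, ← prod_pow, ENNReal.ofReal_mul (sq_nonneg _),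
    ENNReal.ofReal_prod_of_nonneg fun _ _ => sq_nonneg _, mul_comm]

theorem measurable_dysonFactor [MeasurableSpace E] [BorelSpace E] [SecondCountableTopology E]
    {f : ℝ → ℝ} (hf : Measurable f) : Measurable (dysonFactor (n := n) (E := E) f) := by
  refine Finset.measurable_prod _ fun i _ => Finset.measurable_prod _ fun j _ => ?_
  split_ifs <;> fun_prop

theorem sq_dysonFactor_le_one {f : ℝ → ℝ} (hf0 : ∀ t, 0 ≤ f t) (hf1 : ∀ t, f t ≤ 1)
    (x : Fin n → E × ℝ) : dysonFactor f x ^ 2 ≤ 1 := by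
  refine pow_le_one₀ (prod_nonneg fun i _ => prod_nonneg fun j _ => ?_)
    (prod_le_one (fun i _ => prod_nonneg fun j _ => ?_)
      fun i _ => prod_le_one (fun j _ => ?_) fun j _ => ?_) <;>
  split_ifs <;> simp [hf0, hf1]

theorem one_le_ofReal_sq_dysonFactor_add_sum {f : ℝ → ℝ} {R : ℝ}
    (hfR : ∀ t, R ≤ t → f t = 1) (x : Fin n → E × ℝ) :
    1 ≤ ENNReal.ofReal (dysonFactor f x ^ 2) + ∑ p : Fin n × Fin n with p.1 < p.2,
      (Metric.closedBall (x p.1).1 R).indicator 1 (x p.2).1 := by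
  set d : Fin n × Fin n → ℝ := fun p =>
    Real.sqrt (‖(x p.1).1 - (x p.2).1‖ ^ 2 + ((x p.1).2 - (x p.2).2) ^ 2)
  have hF : dysonFactor f x ^ 2 = ∏ p : Fin n × Fin n with p.1 < p.2, f (d p) ^ 2 := by
    rw [prod_pow, prod_filter, Fintype.prod_prod_type, dysonFactor]
  rw [hF, ENNReal.ofReal_prod_of_nonneg fun p _ => sq_nonneg _]
  refine one_le_prod_add_sum _ fun p _ => ?_
  by_cases hp : (x p.2).1 ∈ Metric.closedBall (x p.1).1 R
  · exact Or.inr (by simp [hp])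
  · have hdist : dist (x p.2).1 (x p.1).1 ≤ d p := by
      rw [dist_comm, dist_eq_norm]
      exact Real.le_sqrt_of_sq_le (le_add_of_nonneg_right (sq_nonneg _))
    exact Or.inl (by simp [hfR _ ((not_le.1 hp).le.trans hdist)])

theorem ofReal_productWaveFunction_sq_le_add_sum [NormedSpace ℝ E] {b : E → ℝ}
    {ψ : (Fin n → ℝ) → ℝ} {r : ℝ} {f : ℝ → ℝ} {R : ℝ} (hfR : ∀ t, R ≤ t → f t = 1)
    (x : Fin n → E × ℝ) :
    ENNReal.ofReal (productWaveFunction ψ b r x ^ 2) ≤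
      ENNReal.ofReal (trialWaveFunction ψ b r f x ^ 2) + ∑ p : Fin n × Fin n with p.1 < p.2,
        ENNReal.ofReal (productWaveFunction ψ b r x ^ 2) *
          (Metric.closedBall (x p.1).1 R).indicator 1 (x p.2).1 := by
  calc _ = ENNReal.ofReal (productWaveFunction ψ b r x ^ 2) * 1 := (mul_one _).symm
    _ ≤ ENNReal.ofReal (productWaveFunction ψ b r x ^ 2) *
          (ENNReal.ofReal (dysonFactor f x ^ 2) + ∑ p : Fin n × Fin n with p.1 < p.2,
            (Metric.closedBall (x p.1).1 R).indicator 1 (x p.2).1) :=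
        mul_le_mul_right (one_le_ofReal_sq_dysonFactor_add_sum hfR x) _
    _ = _ := by
        rw [mul_add, mul_sum, ← ENNReal.ofReal_mul (sq_nonneg _), ← mul_pow]
        rfl

end Trial

section Plane

variable {n : ℕ} {b : EuclideanSpace ℝ (Fin 2) → ℝ} {ψ : (Fin n → ℝ) → ℝ} {r R : ℝ}

theorem lintegral_ofReal_rescale_sq (hr : 0 < r) (hbnorm : ∫ y, b y ^ 2 = 1) :
    ∫⁻ y, ENNReal.ofReal ((r⁻¹ * b (r⁻¹ • y)) ^ 2) = 1 := by
  rw [lintegral_ofReal_rescale_pow even_two (.of_integral_ne_zero (by simp [hbnorm])) hr,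
    finrank_euclideanSpace_fin, hbnorm, mul_one, ← mul_pow, mul_inv_cancel₀ hr.ne', one_pow,
    ENNReal.ofReal_one]

theorem lintegral_ofReal_productWaveFunction_sq (hr : 0 < r) (hbmeas : Measurable b)
    (hbnorm : ∫ y, b y ^ 2 = 1) (hψmeas : Measurable ψ) (hψnorm : ∫ z, ψ z ^ 2 = 1) :
    ∫⁻ x, ENNReal.ofReal (productWaveFunction ψ b r x ^ 2) = 1 := by
  have hg : Measurable fun u : Fin n → EuclideanSpace ℝ (Fin 2) =>
      ∏ i, ENNReal.ofReal ((r⁻¹ * b (r⁻¹ • u i)) ^ 2) := by fun_prop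
  have hh : Measurable fun z : Fin n → ℝ => ENNReal.ofReal (ψ z ^ 2) := by fun_prop
  simp_rw [ofReal_productWaveFunction_sq]
  rw [lintegral_comp_arrowProd_mul hg.aemeasurable hh.aemeasurable, volume_pi,
    lintegral_fintype_prod_eq_prod (c := fun _ y => ENNReal.ofReal ((r⁻¹ * b (r⁻¹ • y)) ^ 2))
      fun _ => by fun_prop,
    lintegral_ofReal_eq_one (fun _ => sq_nonneg _) hψnorm]
  simp [lintegral_ofReal_rescale_sq hr hbnorm]

theorem lintegral_ofReal_productWaveFunction_sq_mul_indicator_le (hR : 0 ≤ R) (hr : 0 < r)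
    (hbmeas : Measurable b) (hbnorm : ∫ y, b y ^ 2 = 1) (hb4 : Integrable fun y => b y ^ 4)
    (hψmeas : Measurable ψ) (hψnorm : ∫ z, ψ z ^ 2 = 1) {i j : Fin n} (hij : i ≠ j) :
    ∫⁻ x, ENNReal.ofReal (productWaveFunction ψ b r x ^ 2) *
        (Metric.closedBall (x i).1 R).indicator 1 (x j).1 ≤
      ENNReal.ofReal (Real.pi * R ^ 2 / r ^ 2 * ∫ y, b y ^ 4) := by
  set β : EuclideanSpace ℝ (Fin 2) → ℝ≥0∞ := fun y => ENNReal.ofReal ((r⁻¹ * b (r⁻¹ • y)) ^ 2)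
  set K : EuclideanSpace ℝ (Fin 2) → EuclideanSpace ℝ (Fin 2) → ℝ≥0∞ :=
    fun a y => (Metric.closedBall a R).indicator 1 y
  have hKsymm : ∀ a y, K a y = K y a := by
    intro a y
    simp [K, Set.indicator, dist_comm]
  have hV : ∀ a, ∫⁻ y, K a y = ENNReal.ofReal R ^ 2 * ENNReal.ofReal Real.pi := by
    intro a
    rw [lintegral_indicator_one measurableSet_closedBall,
      EuclideanSpace.volume_closedBall_fin_two]
  have hβ2 : ∫⁻ y, β y ^ 2 = ENNReal.ofReal (r ^ 2 * r⁻¹ ^ 4 * ∫ y, b y ^ 4) := by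
    simp_rw [β, ← ENNReal.ofReal_pow (sq_nonneg _), ← pow_mul]
    rw [lintegral_ofReal_rescale_pow (by decide) hb4 hr, finrank_euclideanSpace_fin]
  have hg : Measurable fun u : Fin n → EuclideanSpace ℝ (Fin 2) =>
      (∏ k, β (u k)) * K (u i) (u j) := by
    have := measurable_indicator_closedBall (X := EuclideanSpace ℝ (Fin 2)) R
    fun_prop
  have hh : Measurable fun z : Fin n → ℝ => ENNReal.ofReal (ψ z ^ 2) := by fun_prop
  calc _ = (∫⁻ u : Fin n → _, (∏ k, β (u k)) * K (u i) (u j)) *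
        ∫⁻ z, ENNReal.ofReal (ψ z ^ 2) := by
        rw [← lintegral_comp_arrowProd_mul hg.aemeasurable hh.aemeasurable]
        refine lintegral_congr fun x => ?_
        rw [ofReal_productWaveFunction_sq, mul_right_comm]
    _ ≤ (ENNReal.ofReal R ^ 2 * ENNReal.ofReal Real.pi * (∫⁻ y, β y ^ 2) *
          (∫⁻ y, β y) ^ (Fintype.card (Fin n) - 2)) * 1 := by
        rw [lintegral_ofReal_eq_one (fun _ => sq_nonneg _) hψnorm, volume_pi]
        gcongr
        exact lintegral_prod_mul_kernel_le (by fun_prop : Measurable β)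
          (measurable_indicator_closedBall R) hKsymm hV hij
    _ = _ := by
        rw [hβ2, lintegral_ofReal_rescale_sq hr hbnorm, one_pow, mul_one, mul_one,
          ← ENNReal.ofReal_pow hR, ← ENNReal.ofReal_mul (sq_nonneg R),
          ← ENNReal.ofReal_mul (by positivity)]
        congr 1
        field_simp

theorem one_le_lintegral_ofReal_trialWaveFunction_sq_add (hR : 0 ≤ R) (hr : 0 < r)
    (hbmeas : Measurable b) (hbnorm : ∫ y, b y ^ 2 = 1) (hb4 : Integrable fun y => b y ^ 4)
    (hψmeas : Measurable ψ) (hψnorm : ∫ z, ψ z ^ 2 = 1) {f : ℝ → ℝ} (hfR : ∀ t, R ≤ t → f t = 1) :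
    1 ≤ (∫⁻ x, ENNReal.ofReal (trialWaveFunction ψ b r f x ^ 2)) +
      ENNReal.ofReal ((n : ℝ) * ((n : ℝ) - 1) / 2 * (Real.pi * R ^ 2 / r ^ 2) *
        ∫ y, b y ^ 4) := by
  have hpt := ofReal_productWaveFunction_sq_le_add_sum (ψ := ψ) (b := b) (r := r) hfR
  set G := productWaveFunction ψ b r
  set χ : Fin n × Fin n → (Fin n → EuclideanSpace ℝ (Fin 2) × ℝ) → ℝ≥0∞ :=
    fun p x => (Metric.closedBall (x p.1).1 R).indicator 1 (x p.2).1
  have hmeas : ∀ p, Measurable fun x => ENNReal.ofReal (G x ^ 2) * χ p x := by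
    intro p
    have hpair : Measurable fun x : Fin n → EuclideanSpace ℝ (Fin 2) × ℝ =>
        ((x p.1).1, (x p.2).1) := by fun_prop
    have hχ := (measurable_indicator_closedBall (X := EuclideanSpace ℝ (Fin 2)) R).comp hpair
    exact ((measurable_productWaveFunction hbmeas hψmeas).pow_const 2).ennreal_ofReal.mul hχ
  calc 1 = ∫⁻ x, ENNReal.ofReal (G x ^ 2) :=
        (lintegral_ofReal_productWaveFunction_sq hr hbmeas hbnorm hψmeas hψnorm).symm
    _ ≤ _ := lintegral_mono hpt
    _ = (∫⁻ x, ENNReal.ofReal (trialWaveFunction ψ b r f x ^ 2)) +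
          ∑ p : Fin n × Fin n with p.1 < p.2, ∫⁻ x, ENNReal.ofReal (G x ^ 2) * χ p x := by
        rw [lintegral_add_right _ (Finset.measurable_sum _ fun p _ => hmeas p),
          lintegral_finsetSum _ fun p _ => hmeas p]
    _ ≤ (∫⁻ x, ENNReal.ofReal (trialWaveFunction ψ b r f x ^ 2)) +
          ∑ _p : Fin n × Fin n with _p.1 < _p.2,
            ENNReal.ofReal (Real.pi * R ^ 2 / r ^ 2 * ∫ y, b y ^ 4) := by
        gcongr with p hp
        exact lintegral_ofReal_productWaveFunction_sq_mul_indicator_le hR hr hbmeas hbnorm hb4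
          hψmeas hψnorm (mem_filter.1 hp).2.ne
    _ = _ := by
        rw [sum_const, nsmul_eq_mul, Fintype.card_product_filter_lt, Fintype.card_fin,
          ← ENNReal.ofReal_natCast, ← ENNReal.ofReal_mul (Nat.cast_nonneg _),
          Nat.cast_choose_two, mul_assoc]

theorem lintegral_ofReal_trialWaveFunction_sq_le_one (hr : 0 < r) (hbmeas : Measurable b)
    (hbnorm : ∫ y, b y ^ 2 = 1) (hψmeas : Measurable ψ) (hψnorm : ∫ z, ψ z ^ 2 = 1) {f : ℝ → ℝ}
    (hf0 : ∀ t, 0 ≤ f t) (hf1 : ∀ t, f t ≤ 1) :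
    ∫⁻ x, ENNReal.ofReal (trialWaveFunction ψ b r f x ^ 2) ≤ 1 := by
  rw [← lintegral_ofReal_productWaveFunction_sq hr hbmeas hbnorm hψmeas hψnorm]
  refine lintegral_mono fun x => ENNReal.ofReal_le_ofReal ?_
  rw [trialWaveFunction, mul_pow]
  exact mul_le_of_le_one_right (sq_nonneg _) (sq_dysonFactor_le_one hf0 hf1 x)

end Plane

theorem ENNReal.sub_le_toReal_of_one_le_add {a : ℝ≥0∞} {c : ℝ} (ha : a ≠ ⊤) (hc : 0 ≤ c)
    (h : 1 ≤ a + ENNReal.ofReal c) : 1 - c ≤ a.toReal := by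
  have := ENNReal.toReal_mono (ENNReal.add_ne_top.2 ⟨ha, ENNReal.ofReal_ne_top⟩) h
  rw [ENNReal.toReal_add ha ENNReal.ofReal_ne_top, ENNReal.toReal_ofReal hc,
    ENNReal.toReal_one] at this
  linarith

/-- **Norm estimate for the Dyson-type trial function.** With `Ψ = G·F`,
`G(x₁,…,xₙ) = ψ(z₁,…,zₙ) ∏ᵢ b_r(x⊥ᵢ)` normalized (`∫ψ² = 1`, `b_r(x) = r⁻¹ b(x/r)` with
`∫b² = 1`), and `F = ∏_{i<j} f(|xᵢ-xⱼ|)` where `0 ≤ f ≤ 1` and `f(t) = 1` for `t ≥ R`: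
`⟨Ψ,Ψ⟩ ≥ 1 - (n(n-1)/2)(πR²/r²)‖b‖₄⁴`. -/
theorem trial_function_norm_estimate (n : ℕ) (R r : ℝ) (hR : 0 < R) (hr : 0 < r)
    (b : EuclideanSpace ℝ (Fin 2) → ℝ) (hbmeas : Measurable b)
    (hbnorm : (∫ y, b y ^ 2) = 1) (hb4 : Integrable (fun y => b y ^ 4))
    (ψ : (Fin n → ℝ) → ℝ) (hψmeas : Measurable ψ) (hψnorm : (∫ z, ψ z ^ 2) = 1)
    (f : ℝ → ℝ) (hfmeas : Measurable f)
    (hf0 : ∀ t, 0 ≤ f t) (hf1 : ∀ t, f t ≤ 1) (hfR : ∀ t, R ≤ t → f t = 1) :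
    1 - ((n : ℝ) * ((n : ℝ) - 1) / 2) * (Real.pi * R ^ 2 / r ^ 2) *
        (∫ y, b y ^ 4) ≤
      ∫ x : Fin n → EuclideanSpace ℝ (Fin 2) × ℝ,
        ((ψ (fun i => (x i).2) * ∏ i, r⁻¹ * b (r⁻¹ • (x i).1)) *
          ∏ i, ∏ j, (if i < j then
            f (Real.sqrt (‖(x i).1 - (x j).1‖ ^ 2 + ((x i).2 - (x j).2) ^ 2))
          else 1)) ^ 2 := by
  change _ ≤ ∫ x, trialWaveFunction ψ b r f x ^ 2
  have hΨ : Measurable fun x => trialWaveFunction ψ b r f x ^ 2 :=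
    ((measurable_productWaveFunction hbmeas hψmeas).mul
      (measurable_dysonFactor hfmeas)).pow_const 2
  have hfin : ∫⁻ x, ENNReal.ofReal (trialWaveFunction ψ b r f x ^ 2) ≠ ⊤ :=
    ne_top_of_le_ne_top ENNReal.one_ne_top
      (lintegral_ofReal_trialWaveFunction_sq_le_one hr hbmeas hbnorm hψmeas hψnorm hf0 hf1)
  have hc : 0 ≤ (n : ℝ) * ((n : ℝ) - 1) / 2 * (Real.pi * R ^ 2 / r ^ 2) * ∫ y, b y ^ 4 := by
    rw [← Nat.cast_choose_two]
    exact mul_nonneg (by positivity) (integral_nonneg fun y => by positivity)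
  rw [integral_eq_lintegral_of_nonneg_ae (.of_forall fun _ => sq_nonneg _)
    hΨ.aestronglyMeasurable]
  exact ENNReal.sub_le_toReal_of_one_le_add hfin hc
    (one_le_lintegral_ofReal_trialWaveFunction_sq_add hR.le hr hbmeas hbnorm hb4 hψmeas hψnorm
      hfR)
end
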